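/- arXiv:2510.10929 — 3 statements merged into one kernel-verified Lean document; each statement's English description precedes it below -/
import Mathlib

section
/- Under the rule WPS^H (the weighted proportional sharing rule with weights w_i = H_i), let T^h be a Nash equilibrium that is pointwise least among all Nash equilibria. Then: for every retailer i ∈ U, if T^h_i = 2·T^c_i, then T^c_i = min_{j∈N} T^c_j and √s/√2 ≤ T^c_i < √s; and for every retailer i ∈ V, if T^h_i = 2·T^c_i, then √(K_i/H_i)/√2 ≤ T^c_i < √(K_i/H_i). -/
open Finset

noncomputable section

/-- `t` is a power-of-two (POT) value with base period `B`. -/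
def IsPOT (B t : ℝ) : Prop := ∃ z : ℤ, t = (2 : ℝ) ^ z * B

/-- Membership of an interval `t` in retailer `i`'s strategy set `Γ_i`,
given major setup cost `K0`, minor setup cost `Ki` and holding parameter `Hi`. -/
def InStrategy (B K0 Ki Hi t : ℝ) : Prop :=
  IsPOT B t ∧ Real.sqrt (Ki / (2 * Hi)) ≤ t ∧ t ≤ Real.sqrt (2 * (K0 + Ki) / Hi)

/-- `N[τ; T_{-i}] = {i} ∪ {j : T j ≤ τ}`. -/
def grp {n : ℕ} (T : Fin n → ℝ) (i : Fin n) (τ : ℝ) : Finset (Fin n) :=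
  insert i (Finset.univ.filter fun j => T j ≤ τ)

/-- The set of levels `L(T) = {T j : j ∈ N}`. -/
def levels {n : ℕ} (T : Fin n → ℝ) : Finset ℝ := Finset.image T Finset.univ

/-- `1/τ⁺`: the inverse of the smallest level larger than `τ`, with the
convention that it is `0` when no larger level exists. -/
def invSucc (L : Finset ℝ) (τ : ℝ) : ℝ :=
  if h : (L.filter fun u => τ < u).Nonempty then 1 / (L.filter fun u => τ < u).min' h
  else 0

/-- Major-setup share `x_i(T)` of retailer `i` under the weighted proportional
sharing rule with weights `w` (intended for strictly positive weights). -/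
def share {n : ℕ} (K0 : ℝ) (w T : Fin n → ℝ) (i : Fin n) : ℝ :=
  ∑ τ ∈ (levels T).filter (fun τ => T i ≤ τ),
    (1 / τ - invSucc (levels T) τ) *
      (w i / ∑ j ∈ Finset.univ.filter (fun j => T j ≤ τ), w j) * K0

/-- Major-setup share for nonnegative weights: if the order group has total
weight zero, the major setup cost is split equally among its members. -/
def shareZ {n : ℕ} (K0 : ℝ) (w T : Fin n → ℝ) (i : Fin n) : ℝ :=
  ∑ τ ∈ (levels T).filter (fun τ => T i ≤ τ),
    (1 / τ - invSucc (levels T) τ) *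
      (if 0 < ∑ j ∈ Finset.univ.filter (fun j => T j ≤ τ), w j
        then w i / ∑ j ∈ Finset.univ.filter (fun j => T j ≤ τ), w j
        else 1 / ((Finset.univ.filter fun j => T j ≤ τ) : Finset (Fin n)).card) * K0

/-- Individual cost `f_i(T) = H_i T_i + K_i / T_i + x_i(T)` under `WPS^w`. -/
def indCost {n : ℕ} (K0 : ℝ) (K H w : Fin n → ℝ) (T : Fin n → ℝ) (i : Fin n) : ℝ :=
  H i * T i + K i / T i + share K0 w T i

/-- Individual cost under the zero-weight-tolerant sharing rule. -/
def indCostZ {n : ℕ} (K0 : ℝ) (K H w : Fin n → ℝ) (T : Fin n → ℝ) (i : Fin n) : ℝ :=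
  H i * T i + K i / T i + shareZ K0 w T i

/-- System cost `C(T)`. -/
def sysCost {n : ℕ} (K0 : ℝ) (K H : Fin n → ℝ) (T : Fin n → ℝ) : ℝ :=
  (∑ i, (H i * T i + K i / T i)) + K0 / (⨅ i, T i)

/-- Nash equilibrium of the game induced by `WPS^w`. -/
def IsNE {n : ℕ} (B K0 : ℝ) (K H w : Fin n → ℝ) (T : Fin n → ℝ) : Prop :=
  (∀ i, InStrategy B K0 (K i) (H i) (T i)) ∧
  ∀ i t, InStrategy B K0 (K i) (H i) t →
    indCost K0 K H w T i ≤ indCost K0 K H w (Function.update T i t) i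

/-- Nash equilibrium for the zero-weight-tolerant sharing rule. -/
def IsNEZ {n : ℕ} (B K0 : ℝ) (K H w : Fin n → ℝ) (T : Fin n → ℝ) : Prop :=
  (∀ i, InStrategy B K0 (K i) (H i) (T i)) ∧
  ∀ i t, InStrategy B K0 (K i) (H i) t →
    indCostZ K0 K H w T i ≤ indCostZ K0 K H w (Function.update T i t) i

/-- `s = min_{∅ ⊂ S ⊆ N} (K0 + Σ_{i∈S} K_i)/(Σ_{i∈S} H_i)`. -/
def sval (n : ℕ) (K0 : ℝ) (K H : Fin n → ℝ) : ℝ :=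
  sInf ((fun S : Finset (Fin n) => (K0 + ∑ i ∈ S, K i) / ∑ i ∈ S, H i) '' {S | S.Nonempty})

/-- `[b]_POT`: the POT value `a` with `b/√2 < a ≤ √2·b`. -/
def potRound (B b : ℝ) : ℝ := (2 : ℝ) ^ (round (Real.logb 2 (b / B))) * B

/-- The optimal centralized POT policy `T^c`. -/
def Tc (n : ℕ) (B K0 : ℝ) (K H : Fin n → ℝ) (i : Fin n) : ℝ :=
  if K i ≤ sval n K0 K H * H i then potRound B (Real.sqrt (sval n K0 K H))
  else potRound B (Real.sqrt (K i / H i))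

end

/-!
Since `T^h` is the least equilibrium, it lies below every equilibrium, so it suffices to find an
equilibrium `T` with `T_j < 2 max(√s, √(K_j/H_j))` for all `j`; the remaining bounds are
properties of the rounding `[·]_POT`.

Under `WPS^w` the extra major-setup share a retailer pays for a shorter interval is a sum over
the newly covered gaps `1/τ - 1/τ⁺`, weighted by `w_j / W(τ)` where `W(τ)` is the total weight
ordering at intervals `≤ τ`; it shrinks when the others shorten their intervals. So the game has
strategic complements, and best-response descent from a profile from which nobody wants to move
up ends at an equilibrium below it. Rounding `max(√s, √(K_j/H_j))` up to a POT value gives such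
a profile `P`: every retailer of `U` then orders at or below `P_j`, and their holding parameters
cover `K_0` at rate `s`, so moving up does not pay.
-/

namespace JRP

open Finset Function

section Gaps

variable {L : Finset ℝ}

lemma invSucc_congr {L' : Finset ℝ} {σ τ : ℝ}
    (h : L.filter (σ < ·) = L'.filter (τ < ·)) : invSucc L σ = invSucc L' τ := by
  unfold invSucc
  simp_rw [h]

lemma invSucc_eq_one_div {τ m : ℝ} (hm : m ∈ L) (hτm : τ < m)
    (hmin : ∀ x ∈ L, τ < x → m ≤ x) : invSucc L τ = 1 / m := by
  have hmem : m ∈ L.filter (τ < ·) := mem_filter.2 ⟨hm, hτm⟩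
  rw [invSucc, dif_pos ⟨m, hmem⟩]
  congr 1
  exact le_antisymm (min'_le _ _ hmem)
    (le_min' _ _ _ fun x hx => hmin x (mem_filter.1 hx).1 (mem_filter.1 hx).2)

lemma invSucc_le_one_div {τ : ℝ} (hτ : 0 < τ) : invSucc L τ ≤ 1 / τ := by
  unfold invSucc
  split_ifs with h
  · exact one_div_le_one_div_of_le hτ (mem_filter.1 (min'_mem _ h)).2.le
  · positivity

lemma invSucc_insert_of_le {a τ : ℝ} (h : a ≤ τ) : invSucc (insert a L) τ = invSucc L τ :=
  invSucc_congr (by rw [filter_insert, if_neg h.not_gt])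

lemma invSucc_insert_of_lt_of_lt {a τ x : ℝ} (hx : x ∈ L) (hτx : τ < x) (hxa : x < a) :
    invSucc (insert a L) τ = invSucc L τ := by
  have hne : (L.filter (τ < ·)).Nonempty := ⟨x, mem_filter.2 ⟨hx, hτx⟩⟩
  set m := (L.filter (τ < ·)).min' hne
  have hmF : m ∈ L.filter (τ < ·) := min'_mem _ hne
  have hmx : m ≤ x := min'_le _ _ (mem_filter.2 ⟨hx, hτx⟩)
  rw [show invSucc L τ = 1 / m by rw [invSucc, dif_pos hne]]
  refine invSucc_eq_one_div (mem_insert_of_mem (mem_filter.1 hmF).1) (mem_filter.1 hmF).2 ?_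
  intro y hy hτy
  rcases mem_insert.1 hy with rfl | hy
  · exact (hmx.trans_lt hxa).le
  · exact min'_le _ _ (mem_filter.2 ⟨hy, hτy⟩)

lemma sum_gap_Ioi (L : Finset ℝ) (c : ℝ) :
    ∑ τ ∈ L.filter (c < ·), (1 / τ - invSucc L τ) = invSucc L c := by
  induction L using Finset.induction_on_min generalizing c with
  | empty => simp [invSucc]
  | insert a L hlt ih =>
    have hgap : ∀ τ ∈ L, invSucc (insert a L) τ = invSucc L τ :=
      fun τ hτ => invSucc_insert_of_le (hlt τ hτ).le
    rcases lt_or_ge c a with hca | hac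
    · have hall : (insert a L).filter (c < ·) = insert a L :=
        filter_true_of_mem fun x hx => by
          rcases mem_insert.1 hx with rfl | hx
          exacts [hca, hca.trans (hlt x hx)]
      have hL : L.filter (a < ·) = L := filter_true_of_mem hlt
      have ha : a ∉ L := fun h => lt_irrefl a (hlt a h)
      have hsum := ih a
      rw [hL] at hsum
      rw [hall, sum_insert ha, sum_congr rfl fun τ hτ => by rw [hgap τ hτ], hsum,
        invSucc_insert_of_le le_rfl,
        invSucc_eq_one_div (mem_insert_self a L) hca fun x hx hcx => ?_]
      · ring
      · rcases mem_insert.1 hx with rfl | hx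
        exacts [le_rfl, (hlt x hx).le]
    · rw [filter_insert, if_neg hac.not_gt, sum_congr rfl fun τ hτ => by
        rw [hgap τ (mem_filter.1 hτ).1], ih, invSucc_insert_of_le hac]

lemma sum_gap_Ici {c : ℝ} (hc : c ∈ L) :
    ∑ τ ∈ L.filter (c ≤ ·), (1 / τ - invSucc L τ) = 1 / c := by
  have hsplit : L.filter (c ≤ ·) = insert c (L.filter (c < ·)) := by
    ext x
    simp only [mem_filter, mem_insert]
    constructor
    · rintro ⟨hx, hcx⟩
      rcases hcx.eq_or_lt with rfl | hcx
      exacts [Or.inl rfl, Or.inr ⟨hx, hcx⟩]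
    · rintro (rfl | ⟨hx, hcx⟩)
      exacts [⟨hc, le_rfl⟩, ⟨hx, hcx.le⟩]
  rw [hsplit, sum_insert (by simp), sum_gap_Ioi]
  ring

lemma filter_le_eq_filter_Ico_union {t u : ℝ} (htu : t ≤ u) :
    L.filter (t ≤ ·) = L.filter (fun τ => t ≤ τ ∧ τ < u) ∪ L.filter (u ≤ ·) := by
  ext x
  simp only [mem_filter, mem_union]
  constructor
  · rintro ⟨hx, htx⟩
    rcases lt_or_ge x u with hxu | hux
    exacts [Or.inl ⟨hx, htx, hxu⟩, Or.inr ⟨hx, hux⟩]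
  · rintro (⟨hx, htx, -⟩ | ⟨hx, hux⟩)
    exacts [⟨hx, htx⟩, ⟨hx, htu.trans hux⟩]

lemma disjoint_filter_Ico_filter_le {t u : ℝ} :
    Disjoint (L.filter (fun τ => t ≤ τ ∧ τ < u)) (L.filter (u ≤ ·)) :=
  disjoint_filter.2 fun _ _ h h' => h'.not_gt h.2

lemma sum_gap_Ico {t u : ℝ} (ht : t ∈ L) (hu : u ∈ L) (htu : t ≤ u) :
    ∑ τ ∈ L.filter (fun τ => t ≤ τ ∧ τ < u), (1 / τ - invSucc L τ) = 1 / t - 1 / u := by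
  have h := sum_gap_Ici ht
  rw [filter_le_eq_filter_Ico_union htu, sum_union disjoint_filter_Ico_filter_le,
    sum_gap_Ici hu] at h
  linarith

lemma sum_gap_mul_le {F : Finset ℝ} {g : ℝ → ℝ} {M : ℝ} (hF : ∀ τ ∈ F, 0 < τ)
    (hg : ∀ τ ∈ F, g τ ≤ M) :
    ∑ τ ∈ F, (1 / τ - invSucc L τ) * g τ ≤ M * ∑ τ ∈ F, (1 / τ - invSucc L τ) := by
  rw [mul_sum]
  refine sum_le_sum fun τ hτ => ?_
  rw [mul_comm M]
  exact mul_le_mul_of_nonneg_left (hg τ hτ) (sub_nonneg.2 (invSucc_le_one_div (hF τ hτ)))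

lemma le_sum_gap_mul {F : Finset ℝ} {g : ℝ → ℝ} {m : ℝ} (hF : ∀ τ ∈ F, 0 < τ)
    (hg : ∀ τ ∈ F, m ≤ g τ) :
    m * ∑ τ ∈ F, (1 / τ - invSucc L τ) ≤ ∑ τ ∈ F, (1 / τ - invSucc L τ) * g τ := by
  rw [mul_sum]
  refine sum_le_sum fun τ hτ => ?_
  rw [mul_comm m]
  exact mul_le_mul_of_nonneg_left (hg τ hτ) (sub_nonneg.2 (invSucc_le_one_div (hF τ hτ)))

/-- `hg` says that `g` takes the same value at `a` as at its predecessor in `L`; inserting `a`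
splits the predecessor's gap in two. -/
lemma sum_gap_mul_insert {a c : ℝ} (g : ℝ → ℝ) (ha : a ∉ L) (hc : c ∈ L)
    (hg : ∀ σ ∈ L, σ < a → (∀ x ∈ L, σ < x → a < x) → g σ = g a) :
    ∑ τ ∈ (insert a L).filter (c ≤ ·), (1 / τ - invSucc (insert a L) τ) * g τ
      = ∑ τ ∈ L.filter (c ≤ ·), (1 / τ - invSucc L τ) * g τ := by
  rcases lt_or_gt_of_ne (show a ≠ c by rintro rfl; exact ha hc) with hac | hca
  · rw [filter_insert, if_neg hac.not_ge]
    exact sum_congr rfl fun τ hτ => by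
      rw [invSucc_insert_of_le (hac.trans_le (mem_filter.1 hτ).2).le]
  have hne : (L.filter (· < a)).Nonempty := ⟨c, mem_filter.2 ⟨hc, hca⟩⟩
  set σ := (L.filter (· < a)).max' hne
  obtain ⟨hσL, hσa⟩ := mem_filter.1 (max'_mem _ hne)
  have hcσ : c ≤ σ := le_max' _ _ (mem_filter.2 ⟨hc, hca⟩)
  have hnext : ∀ x ∈ L, σ < x → a < x := fun x hx hσx =>
    (lt_or_gt_of_ne (ne_of_mem_of_not_mem hx ha)).resolve_left
      fun hxa => hσx.not_ge (le_max' _ _ (mem_filter.2 ⟨hx, hxa⟩))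
  have hsucc_a : invSucc (insert a L) a = invSucc L σ := invSucc_congr <| by
    ext x
    simp only [mem_filter, mem_insert]
    exact ⟨fun ⟨hx, hax⟩ => ⟨hx.resolve_left (by rintro rfl; exact lt_irrefl _ hax),
      hσa.trans hax⟩, fun ⟨hx, hσx⟩ => ⟨Or.inr hx, hnext x hx hσx⟩⟩
  have hsucc_σ : invSucc (insert a L) σ = 1 / a :=
    invSucc_eq_one_div (mem_insert_self a L) hσa fun x hx hσx => by
      rcases mem_insert.1 hx with rfl | hx
      exacts [le_rfl, (hnext x hx hσx).le]
  have hsucc : ∀ τ ∈ L.filter (c ≤ ·), τ ≠ σ → invSucc (insert a L) τ = invSucc L τ := by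
    intro τ hτ hτσ
    rcases lt_or_gt_of_ne (show τ ≠ a by rintro rfl; exact ha (mem_filter.1 hτ).1) with hτa | hτa
    · exact invSucc_insert_of_lt_of_lt hσL
        ((le_max' _ _ (mem_filter.2 ⟨(mem_filter.1 hτ).1, hτa⟩)).lt_of_ne hτσ) hσa
    · exact invSucc_insert_of_le hτa.le
  have hchange : ∑ τ ∈ L.filter (c ≤ ·), (1 / τ - invSucc (insert a L) τ) * g τ
      - ∑ τ ∈ L.filter (c ≤ ·), (1 / τ - invSucc L τ) * g τ = (invSucc L σ - 1 / a) * g σ := by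
    rw [← sum_sub_distrib, sum_eq_single_of_mem σ (mem_filter.2 ⟨hσL, hcσ⟩)
      fun τ hτ hτσ => by rw [hsucc τ hτ hτσ, sub_self], hsucc_σ]
    ring
  rw [filter_insert, if_pos (hca.le), sum_insert (fun h => ha (mem_filter.1 h).1), hsucc_a,
    ← hg σ hσL hσa hnext]
  linarith

lemma sum_gap_mul_of_subset {L₀ : Finset ℝ} {c : ℝ} (g : ℝ → ℝ) (hL : L₀ ⊆ L) (hc : c ∈ L₀)
    (hg : ∀ σ τ, σ ≤ τ → (∀ x ∈ L₀, σ < x → τ < x) → g σ = g τ) :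
    ∑ τ ∈ L.filter (c ≤ ·), (1 / τ - invSucc L τ) * g τ
      = ∑ τ ∈ L₀.filter (c ≤ ·), (1 / τ - invSucc L₀ τ) * g τ := by
  rw [← union_sdiff_of_subset hL]
  induction L \ L₀ using Finset.induction_on with
  | empty => rw [union_empty]
  | insert a E _ ih =>
    rw [union_insert]
    by_cases ha : a ∈ L₀ ∪ E
    · rw [insert_eq_of_mem ha, ih]
    · rw [sum_gap_mul_insert g ha (mem_union_left _ hc) fun σ _ hσa hnext =>
        hg σ a hσa.le fun x hx => hnext x (mem_union_left _ hx), ih]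

end Gaps

section Shares

variable {n : ℕ} {K0 : ℝ} {w : Fin n → ℝ}

noncomputable def weightBelow (w T : Fin n → ℝ) (τ : ℝ) : ℝ :=
  ∑ k ∈ univ.filter (fun k => T k ≤ τ), w k

lemma le_weightBelow (hw : ∀ k, 0 < w k) {T : Fin n → ℝ} {j : Fin n} {τ : ℝ} (h : T j ≤ τ) :
    w j ≤ weightBelow w T τ :=
  single_le_sum (fun k _ => (hw k).le) (mem_filter.2 ⟨mem_univ j, h⟩)

lemma weightBelow_le_sum (hw : ∀ k, 0 < w k) (T : Fin n → ℝ) (τ : ℝ) :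
    weightBelow w T τ ≤ ∑ k, w k :=
  sum_le_sum_of_subset_of_nonneg (filter_subset _ _) fun k _ _ => (hw k).le

lemma weightBelow_mono (hw : ∀ k, 0 < w k) (T : Fin n → ℝ) {σ τ : ℝ} (h : σ ≤ τ) :
    weightBelow w T σ ≤ weightBelow w T τ :=
  sum_le_sum_of_subset_of_nonneg (monotone_filter_right _ fun _ _ hk => hk.trans h)
    fun k _ _ => (hw k).le

lemma weightBelow_anti (hw : ∀ k, 0 < w k) {T T' : Fin n → ℝ} (h : ∀ k, T' k ≤ T k) (τ : ℝ) :
    weightBelow w T τ ≤ weightBelow w T' τ :=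
  sum_le_sum_of_subset_of_nonneg (monotone_filter_right _ fun k _ hk => (h k).trans hk)
    fun k _ _ => (hw k).le

lemma weightBelow_update_eq (Q : Fin n → ℝ) (j : Fin n) {t u τ : ℝ} (htu : t ≤ u)
    (huτ : u ≤ τ) : weightBelow w (update Q j t) τ = weightBelow w (update Q j u) τ := by
  refine sum_congr (filter_congr fun k _ => ?_) fun _ _ => rfl
  rcases eq_or_ne k j with rfl | hk
  · simp only [update_self]
    exact iff_of_true (htu.trans huτ) huτ
  · simp only [update_of_ne hk]

lemma mem_levels (T : Fin n → ℝ) (i : Fin n) : T i ∈ levels T :=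
  mem_image_of_mem T (mem_univ i)

lemma levels_update_subset {Q : Fin n → ℝ} {j : Fin n} {t : ℝ} {L : Finset ℝ} (ht : t ∈ L)
    (hQ : ∀ k, k ≠ j → Q k ∈ L) : levels (update Q j t) ⊆ L := by
  intro x hx
  obtain ⟨k, -, rfl⟩ := mem_image.1 hx
  rcases eq_or_ne k j with rfl | hk
  · rwa [update_self]
  · rw [update_of_ne hk]
    exact hQ k hk

/-- Any grid containing the levels will do, because `weightBelow w T` only changes at levels. -/
lemma share_eq_sum_gap {T : Fin n → ℝ} {L : Finset ℝ} (i : Fin n) (hL : levels T ⊆ L) :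
    share K0 w T i = ∑ τ ∈ L.filter (T i ≤ ·),
      (1 / τ - invSucc L τ) * (w i / weightBelow w T τ * K0) := by
  rw [sum_gap_mul_of_subset _ hL (mem_levels T i)]
  · simp only [share, weightBelow, mul_assoc]
  · intro σ τ hστ hnext
    rw [show weightBelow w T σ = weightBelow w T τ from
      sum_congr (filter_congr fun k _ => ⟨fun h => h.trans hστ, fun h => ?_⟩) fun _ _ => rfl]
    by_contra hσk
    exact (hnext (T k) (mem_levels T k) (not_le.1 hσk)).not_ge h

lemma share_le (hK0 : 0 ≤ K0) (hw : ∀ k, 0 < w k) {T : Fin n → ℝ} {i : Fin n} (hT : 0 < T i) :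
    share K0 w T i ≤ K0 / T i := by
  rw [share_eq_sum_gap i subset_rfl]
  calc _ ≤ K0 * ∑ τ ∈ (levels T).filter (T i ≤ ·), (1 / τ - invSucc (levels T) τ) :=
        sum_gap_mul_le (fun τ hτ => hT.trans_le (mem_filter.1 hτ).2) fun τ hτ => by
          have hW := le_weightBelow hw (mem_filter.1 hτ).2
          exact mul_le_of_le_one_left hK0 ((div_le_one ((hw i).trans_le hW)).2 hW)
    _ = K0 / T i := by rw [sum_gap_Ici (mem_levels T i), mul_one_div]

lemma le_share (hK0 : 0 ≤ K0) (hw : ∀ k, 0 < w k) {T : Fin n → ℝ} {i : Fin n}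
    (hT : 0 < T i) : w i / (∑ k, w k) * K0 / T i ≤ share K0 w T i := by
  rw [share_eq_sum_gap i subset_rfl]
  calc w i / (∑ k, w k) * K0 / T i
      = w i / (∑ k, w k) * K0 * ∑ τ ∈ (levels T).filter (T i ≤ ·),
          (1 / τ - invSucc (levels T) τ) := by rw [sum_gap_Ici (mem_levels T i), mul_one_div]
    _ ≤ _ := le_sum_gap_mul (fun τ hτ => hT.trans_le (mem_filter.1 hτ).2) fun τ hτ => by
          have hW := le_weightBelow hw (mem_filter.1 hτ).2
          gcongr
          · exact (hw i).le
          · exact (hw i).trans_le hW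
          · exact weightBelow_le_sum hw T τ

/-- Above `u` both profiles have the same order groups, so only the gaps in `[t, u)` remain. -/
lemma share_update_sub (Q : Fin n → ℝ) (j : Fin n) {t u : ℝ} {L : Finset ℝ} (htu : t ≤ u)
    (ht : t ∈ L) (hu : u ∈ L) (hQ : ∀ k, k ≠ j → Q k ∈ L) :
    share K0 w (update Q j t) j - share K0 w (update Q j u) j
      = ∑ τ ∈ L.filter (fun τ => t ≤ τ ∧ τ < u),
          (1 / τ - invSucc L τ) * (w j / weightBelow w (update Q j t) τ * K0) := by
  rw [share_eq_sum_gap j (levels_update_subset ht hQ),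
    share_eq_sum_gap j (levels_update_subset hu hQ), update_self, update_self,
    filter_le_eq_filter_Ico_union htu, sum_union disjoint_filter_Ico_filter_le,
    add_sub_assoc, add_eq_left, sub_eq_zero]
  exact sum_congr rfl fun τ hτ => by rw [weightBelow_update_eq Q j htu (mem_filter.1 hτ).2]

lemma share_update_sub_le (hK0 : 0 ≤ K0) (hw : ∀ k, 0 < w k) (Q : Fin n → ℝ) (j : Fin n)
    {t u : ℝ} (ht : 0 < t) (htu : t ≤ u) :
    share K0 w (update Q j t) j - share K0 w (update Q j u) j
      ≤ w j / weightBelow w (update Q j t) t * K0 * (1 / t - 1 / u) := by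
  set L := insert t (insert u (levels Q))
  have htL : t ∈ L := mem_insert_self _ _
  have huL : u ∈ L := mem_insert_of_mem (mem_insert_self _ _)
  rw [share_update_sub Q j htu htL huL fun k _ => mem_insert_of_mem (mem_insert_of_mem
    (mem_levels Q k)), ← sum_gap_Ico htL huL htu]
  refine sum_gap_mul_le (fun τ hτ => ht.trans_le (mem_filter.1 hτ).2.1) fun τ hτ => ?_
  have hW := le_weightBelow hw (T := update Q j t) (update_self j t Q).le
  gcongr
  · exact (hw j).le
  · exact (hw j).trans_le hW
  · exact weightBelow_mono hw _ (mem_filter.1 hτ).2.1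

lemma share_update_sub_mono (hK0 : 0 ≤ K0) (hw : ∀ k, 0 < w k) {Q Q' : Fin n → ℝ}
    (hQ : ∀ k, Q' k ≤ Q k) (j : Fin n) {t u : ℝ} (ht : 0 < t) (htu : t ≤ u) :
    share K0 w (update Q' j t) j - share K0 w (update Q' j u) j
      ≤ share K0 w (update Q j t) j - share K0 w (update Q j u) j := by
  set L := insert t (insert u (levels Q ∪ levels Q'))
  have htL : t ∈ L := mem_insert_self _ _
  have huL : u ∈ L := mem_insert_of_mem (mem_insert_self _ _)
  rw [share_update_sub Q j htu htL huL fun k _ => mem_insert_of_mem (mem_insert_of_mem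
      (mem_union_left _ (mem_levels Q k))),
    share_update_sub Q' j htu htL huL fun k _ => mem_insert_of_mem (mem_insert_of_mem
      (mem_union_right _ (mem_levels Q' k)))]
  refine sum_le_sum fun τ hτ => ?_
  have htτ := (mem_filter.1 hτ).2.1
  have hW := le_weightBelow hw (T := update Q j t) ((update_self j t Q).trans_le htτ)
  have hgap := sub_nonneg.2 (invSucc_le_one_div (L := L) (ht.trans_le htτ))
  have hanti : weightBelow w (update Q j t) τ ≤ weightBelow w (update Q' j t) τ := by
    refine weightBelow_anti hw (fun k => ?_) τ
    rcases eq_or_ne k j with rfl | hk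
    · simp only [update_self, le_rfl]
    · simp only [update_of_ne hk, hQ k]
  gcongr
  · exact (hw j).le
  · exact (hw j).trans_le hW

end Shares

section Costs

variable {n : ℕ} {K0 : ℝ} {K H w : Fin n → ℝ}

lemma indCost_update_self (Q : Fin n → ℝ) (j : Fin n) (t : ℝ) :
    indCost K0 K H w (update Q j t) j = H j * t + K j / t + share K0 w (update Q j t) j := by
  rw [indCost, update_self]

lemma indCost_update_le_of_le (hK0 : 0 ≤ K0) (hw : ∀ k, 0 < w k) {Q Q' : Fin n → ℝ}
    (hQ : ∀ k, Q' k ≤ Q k) (j : Fin n) {t u : ℝ} (ht : 0 < t) (htu : t ≤ u)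
    (h : indCost K0 K H w (update Q j t) j ≤ indCost K0 K H w (update Q j u) j) :
    indCost K0 K H w (update Q' j t) j ≤ indCost K0 K H w (update Q' j u) j := by
  rw [indCost_update_self, indCost_update_self] at h ⊢
  linarith [share_update_sub_mono hK0 hw hQ j ht htu]

lemma mul_add_div_le_mul_add_div {h C p u : ℝ} (hh : 0 ≤ h) (hp : 0 < p) (hu : 2 * p ≤ u)
    (hC : C ≤ 2 * h * p ^ 2) : h * p + C / p ≤ h * u + C / u := by
  have hu0 : 0 < u := by linarith
  have key : h * u + C / u - (h * p + C / p) = (u - p) * (h * p * u - C) / (p * u) := by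
    field_simp
    ring
  have hpu : 2 * h * p ^ 2 ≤ h * p * u := by nlinarith [mul_nonneg hh hp.le]
  rw [← sub_nonneg, key]
  exact div_nonneg (mul_nonneg (by linarith) (by linarith)) (by positivity)

lemma indCost_le_indCost_update (hK0 : 0 ≤ K0) (hw : ∀ k, 0 < w k) (P : Fin n → ℝ)
    (j : Fin n) (hH : 0 ≤ H j) (hP : 0 < P j) {u : ℝ} (hu : 2 * P j ≤ u)
    (hstab : K j + K0 * w j / weightBelow w P (P j) ≤ 2 * H j * P j ^ 2) :
    indCost K0 K H w P j ≤ indCost K0 K H w (update P j u) j := by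
  have hsh := share_update_sub_le hK0 hw P j hP (by linarith : P j ≤ u)
  rw [update_eq_self] at hsh
  have hC := mul_add_div_le_mul_add_div hH hP hu hstab
  rw [indCost_update_self, indCost]
  have hsplit : ∀ x : ℝ, (K j + K0 * w j / weightBelow w P (P j)) / x
      = K j / x + w j / weightBelow w P (P j) * K0 * (1 / x) := fun x => by ring
  rw [hsplit, hsplit] at hC
  nlinarith

lemma indCost_update_le (hK0 : 0 ≤ K0) (hw : ∀ k, 0 < w k) (Q : Fin n → ℝ) (j : Fin n)
    {t : ℝ} (ht : 0 < t) : indCost K0 K H w (update Q j t) j ≤ H j * t + (K j + K0) / t := by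
  have := share_le hK0 hw (T := update Q j t) (i := j) (by rwa [update_self])
  rw [update_self] at this
  rw [indCost_update_self, add_div]
  linarith

lemma le_indCost_update (hK0 : 0 ≤ K0) (hw : ∀ k, 0 < w k) (Q : Fin n → ℝ) (j : Fin n)
    (hK : 0 ≤ K j) (hH : 0 ≤ H j) {t : ℝ} (ht : 0 < t) :
    w j / (∑ k, w k) * K0 / t ≤ indCost K0 K H w (update Q j t) j := by
  have := le_share hK0 hw (T := update Q j t) (i := j) (by rwa [update_self])
  rw [update_self] at this
  rw [indCost_update_self]
  have : 0 ≤ K j / t := div_nonneg hK ht.le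
  nlinarith

end Costs

section Games

variable {ι : Type*} [DecidableEq ι] (S : ι → Set ℝ) (c : (ι → ℝ) → ι → ℝ)

def UpwardStable (Q : ι → ℝ) : Prop :=
  ∀ j, ∀ u ∈ S j, Q j < u → c Q j ≤ c (update Q j u) j

def StrategicComplements : Prop :=
  ∀ j (Q Q' : ι → ℝ), (∀ k, Q' k ≤ Q k) → ∀ t ∈ S j, ∀ u, t ≤ u →
    c (update Q j t) j ≤ c (update Q j u) j → c (update Q' j t) j ≤ c (update Q' j u) j

variable {S c}

lemma UpwardStable.update_of_isMin (hc : StrategicComplements S c) {Q : ι → ℝ}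
    (hQ : UpwardStable S c Q) (hQS : ∀ k, Q k ∈ S k) {j : ι} {b : ℝ} (hbQ : b ≤ Q j)
    (hbest : ∀ v ∈ S j, c (update Q j b) j ≤ c (update Q j v) j) :
    UpwardStable S c (update Q j b) := by
  intro k v hv hlt
  rcases eq_or_ne k j with rfl | hk
  · rw [update_idem]
    exact hbest v hv
  · rw [update_of_ne hk] at hlt
    have h := hc k Q (update Q j b) (update_le_self_iff.2 hbQ) (Q k) (hQS k) v hlt.le
      (by rw [update_eq_self]; exact hQ k v hv hlt)
    rwa [← update_of_ne hk b Q, update_eq_self] at h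

/-- Take an upward-stable profile below `P` with least total: moving a player down to a best
response would keep it upward stable. -/
theorem exists_nash_le [Fintype ι] (hS : ∀ j, (S j).Finite) (hc : StrategicComplements S c)
    {P : ι → ℝ} (hPS : ∀ j, P j ∈ S j) (hP : UpwardStable S c P) :
    ∃ T : ι → ℝ, (∀ j, T j ∈ S j) ∧ (∀ j, ∀ u ∈ S j, c T j ≤ c (update T j u) j) ∧
      ∀ j, T j ≤ P j := by
  set Φ := {Q : ι → ℝ | (∀ j, Q j ∈ S j) ∧ (∀ j, Q j ≤ P j) ∧ UpwardStable S c Q}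
  have hΦ : Φ.Finite := (Set.Finite.pi hS).subset fun Q hQ => Set.mem_univ_pi.2 hQ.1
  obtain ⟨T, ⟨hTS, hTP, hTup⟩, hmin⟩ :=
    Set.exists_min_image Φ (fun Q => ∑ j, Q j) hΦ ⟨P, hPS, fun _ => le_rfl, hP⟩
  refine ⟨T, hTS, fun j u hu => ?_, hTP⟩
  by_contra! hlt
  obtain ⟨b, hb, hbest⟩ := Set.exists_min_image (S j) (fun v => c (update T j v) j) (hS j) ⟨u, hu⟩
  have hbT : b < T j := by
    by_contra! hTb
    rcases hTb.eq_or_lt with h | h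
    · have := hbest u hu
      rw [← h, update_eq_self] at this
      exact this.not_gt hlt
    · exact (hTup j b hb h).not_gt ((hbest u hu).trans_lt hlt)
  have hle : ∀ k, update T j b k ≤ T k := update_le_self_iff.2 hbT.le
  have hmem : update T j b ∈ Φ := by
    refine ⟨fun k => ?_, fun k => (hle k).trans (hTP k), hTup.update_of_isMin hc hTS hbT.le hbest⟩
    rcases eq_or_ne k j with rfl | hk
    · rwa [update_self]
    · rw [update_of_ne hk]
      exact hTS k
  refine (hmin _ hmem).not_gt (sum_lt_sum (fun k _ => hle k) ⟨j, mem_univ j, ?_⟩)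
  rwa [update_self]

end Games

section PowersOfTwo

variable {B : ℝ}

lemma two_zpow_mul_le_iff (hB : 0 < B) {b : ℝ} (hb : 0 < b) (z : ℤ) :
    2 ^ z * B ≤ b ↔ (z : ℝ) ≤ Real.logb 2 (b / B) := by
  rw [Real.le_logb_iff_rpow_le one_lt_two (div_pos hb hB), Real.rpow_intCast, le_div_iff₀ hB]

lemma two_zpow_mul_lt_iff (hB : 0 < B) {b : ℝ} (hb : 0 < b) (z : ℤ) :
    2 ^ z * B < b ↔ (z : ℝ) < Real.logb 2 (b / B) := by
  rw [Real.lt_logb_iff_rpow_lt one_lt_two (div_pos hb hB), Real.rpow_intCast, lt_div_iff₀ hB]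

lemma IsPOT.pos (hB : 0 < B) {t : ℝ} (ht : IsPOT B t) : 0 < t := by
  obtain ⟨z, rfl⟩ := ht
  positivity

lemma IsPOT.two_mul_le (hB : 0 < B) {t u : ℝ} (ht : IsPOT B t) (hu : IsPOT B u) (htu : t < u) :
    2 * t ≤ u := by
  obtain ⟨a, rfl⟩ := ht
  obtain ⟨b, rfl⟩ := hu
  have hab : a < b := (zpow_lt_zpow_iff_right₀ one_lt_two).1 (lt_of_mul_lt_mul_right htu hB.le)
  calc 2 * (2 ^ a * B) = 2 ^ (a + 1) * B := by rw [zpow_add_one₀ two_ne_zero]; ring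
    _ ≤ 2 ^ b * B := by gcongr; exacts [one_le_two, hab]

lemma setOf_isPOT_finite (hB : 0 < B) {ε : ℝ} (hε : 0 < ε) (M : ℝ) :
    {t : ℝ | IsPOT B t ∧ ε ≤ t ∧ t ≤ M}.Finite := by
  refine ((Set.finite_Icc ⌈Real.logb 2 (ε / B)⌉ ⌊Real.logb 2 (M / B)⌋).image
    fun z : ℤ => (2 : ℝ) ^ z * B).subset ?_
  rintro t ⟨⟨z, rfl⟩, hεt, htM⟩
  have hM : 0 < M := hε.trans_le (hεt.trans htM)
  refine ⟨z, ⟨Int.ceil_le.2 ?_, Int.le_floor.2 ((two_zpow_mul_le_iff hB hM z).1 htM)⟩, rfl⟩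
  exact not_lt.1 fun h => hεt.not_gt ((two_zpow_mul_lt_iff hB hε z).2 h)

noncomputable def potCeil (B b : ℝ) : ℝ := 2 ^ ⌈Real.logb 2 (b / B)⌉ * B

noncomputable def potFloor (B b : ℝ) : ℝ := 2 ^ ⌊Real.logb 2 (b / B)⌋ * B

lemma le_potCeil (hB : 0 < B) {b : ℝ} (hb : 0 < b) : b ≤ potCeil B b :=
  not_lt.1 fun h => ((two_zpow_mul_lt_iff hB hb _).1 h).not_ge (Int.le_ceil _)

lemma potCeil_lt_two_mul (hB : 0 < B) {b : ℝ} (hb : 0 < b) : potCeil B b < 2 * b := by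
  have h := (two_zpow_mul_lt_iff hB hb (⌈Real.logb 2 (b / B)⌉ - 1)).2 (by
    push_cast
    linarith [Int.ceil_lt_add_one (Real.logb 2 (b / B))])
  rw [zpow_sub_one₀ two_ne_zero] at h
  rw [potCeil]
  linarith

lemma potCeil_mono (hB : 0 < B) {b b' : ℝ} (hb : 0 < b) (h : b ≤ b') :
    potCeil B b ≤ potCeil B b' := by
  refine mul_le_mul_of_nonneg_right (zpow_le_zpow_right₀ one_le_two (Int.ceil_le_ceil ?_)) hB.le
  exact Real.logb_le_logb_of_le one_lt_two (by positivity) (by gcongr)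

lemma potFloor_le (hB : 0 < B) {b : ℝ} (hb : 0 < b) : potFloor B b ≤ b :=
  (two_zpow_mul_le_iff hB hb _).2 (Int.floor_le _)

lemma lt_two_mul_potFloor (hB : 0 < B) {b : ℝ} (hb : 0 < b) : b < 2 * potFloor B b := by
  refine not_le.1 fun h => ?_
  have h' : 2 ^ (⌊Real.logb 2 (b / B)⌋ + 1) * B ≤ b := by
    rw [zpow_add_one₀ two_ne_zero]
    rw [potFloor] at h
    linarith
  have := (two_zpow_mul_le_iff hB hb _).1 h'
  push_cast at this
  linarith [Int.lt_floor_add_one (Real.logb 2 (b / B))]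

lemma div_sqrt_two_le_potRound (hB : 0 < B) {b : ℝ} (hb : 0 < b) :
    b / √2 ≤ potRound B b := by
  have h : (2 : ℝ) ^ (Real.logb 2 (b / B) - 1 / 2) ≤ 2 ^ (round (Real.logb 2 (b / B)) : ℝ) :=
    Real.rpow_le_rpow_of_exponent_le one_le_two (sub_half_lt_round _).le
  rw [Real.rpow_sub two_pos, Real.rpow_logb two_pos (by norm_num) (div_pos hb hB),
    ← Real.sqrt_eq_rpow, Real.rpow_intCast] at h
  calc b / √2 = b / B / √2 * B := by field_simp
    _ ≤ potRound B b := mul_le_mul_of_nonneg_right h hB.le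

lemma potRound_mono (hB : 0 < B) {b b' : ℝ} (hb : 0 < b) (h : b ≤ b') :
    potRound B b ≤ potRound B b' := by
  refine mul_le_mul_of_nonneg_right (zpow_le_zpow_right₀ one_le_two ?_) hB.le
  rw [round_eq, round_eq]
  exact Int.floor_mono (add_le_add_left
    (Real.logb_le_logb_of_le one_lt_two (by positivity) (by gcongr)) _)

end PowersOfTwo

section Equilibria

variable {n : ℕ} {B K0 : ℝ} {K H w : Fin n → ℝ}

/-- Strategies below a floor `ε_j` are never best responses, since the share at `t` is at least
`w_j K₀ / (t Σ w)`; above the floor the strategy sets are finite. -/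
theorem exists_isNE_le (hB : 0 < B) (hK0 : 0 < K0) (hK : ∀ j, 0 ≤ K j) (hH : ∀ j, 0 < H j)
    (hw : ∀ j, 0 < w j) {P : Fin n → ℝ} (hP : ∀ j, InStrategy B K0 (K j) (H j) (P j))
    (hstab : ∀ j, K j + K0 * w j / weightBelow w P (P j) ≤ 2 * H j * P j ^ 2) :
    ∃ T, IsNE B K0 K H w T ∧ ∀ j, T j ≤ P j := by
  have hPpos : ∀ j, 0 < P j := fun j => IsPOT.pos hB (hP j).1
  set m : Fin n → ℝ := fun j => w j / (∑ k, w k) * K0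
  set R : Fin n → ℝ := fun j => H j * P j + (K j + K0) / P j
  set ε : Fin n → ℝ := fun j => min (P j) (m j / (R j + 1))
  have hm : ∀ j, 0 < m j := fun j =>
    mul_pos (div_pos (hw j) (sum_pos (fun k _ => hw k) ⟨j, mem_univ j⟩)) hK0
  have hR : ∀ j, 0 < R j := fun j => by
    have := hK j; have := hH j; have := hPpos j; positivity
  have hε : ∀ j, 0 < ε j := fun j => lt_min (hPpos j) (div_pos (hm j) (by linarith [hR j]))
  set S : Fin n → Set ℝ := fun j => {t | InStrategy B K0 (K j) (H j) t ∧ ε j ≤ t}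
  have hSfin : ∀ j, (S j).Finite := fun j =>
    (setOf_isPOT_finite hB (hε j) _).subset fun t ht => ⟨ht.1.1, ht.2, ht.1.2.2⟩
  have hc : StrategicComplements S (indCost K0 K H w) := fun j _ _ hQ t ht _ htu h =>
    indCost_update_le_of_le hK0.le hw hQ j (IsPOT.pos hB ht.1.1) htu h
  have hPS : ∀ j, P j ∈ S j := fun j => ⟨hP j, min_le_left _ _⟩
  have hPup : UpwardStable S (indCost K0 K H w) P := fun j u hu hlt =>
    indCost_le_indCost_update hK0.le hw P j (hH j).le (hPpos j)
      (IsPOT.two_mul_le hB (hP j).1 hu.1.1 hlt) (hstab j)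
  obtain ⟨T, hTS, hTnash, hTP⟩ := exists_nash_le hSfin hc hPS hPup
  refine ⟨T, ⟨fun j => (hTS j).1, fun j u hu => ?_⟩, hTP⟩
  rcases le_or_gt (ε j) u with hεu | huε
  · exact hTnash j u ⟨hu, hεu⟩
  have hu := IsPOT.pos hB hu.1
  have hfloor : R j < m j / u := by
    have : u * (R j + 1) < m j :=
      (lt_div_iff₀ (by linarith [hR j])).1 (huε.trans_le (min_le_right _ _))
    rw [lt_div_iff₀ hu]
    nlinarith
  calc indCost K0 K H w T j ≤ indCost K0 K H w (update T j (P j)) j := hTnash j (P j) (hPS j)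
    _ ≤ R j := indCost_update_le hK0.le hw T j (hPpos j)
    _ ≤ indCost K0 K H w (update T j u) j :=
        hfloor.le.trans (le_indCost_update hK0.le hw T j (hK j) (hH j).le hu)

lemma exists_sval_eq (hn : 0 < n) (K0 : ℝ) (K H : Fin n → ℝ) :
    ∃ S : Finset (Fin n), S.Nonempty ∧ sval n K0 K H = (K0 + ∑ i ∈ S, K i) / ∑ i ∈ S, H i := by
  have hne : ((fun S : Finset (Fin n) => (K0 + ∑ i ∈ S, K i) / ∑ i ∈ S, H i) ''
      {S | S.Nonempty}).Nonempty := ⟨_, {⟨0, hn⟩}, singleton_nonempty _, rfl⟩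
  obtain ⟨S, hS, h⟩ := hne.csInf_mem ((Set.toFinite _).image _)
  exact ⟨S, hS, h.symm⟩

lemma sval_pos (hn : 0 < n) (hK0 : 0 < K0) (hK : ∀ i, 0 ≤ K i) (hH : ∀ i, 0 < H i) :
    0 < sval n K0 K H := by
  obtain ⟨S, hS, h⟩ := exists_sval_eq hn K0 K H
  rw [h]
  exact div_pos (add_pos_of_pos_of_nonneg hK0 (sum_nonneg fun i _ => hK i))
    (sum_pos (fun i _ => hH i) hS)

/-- On a set attaining `s` the surpluses `s H_i - K_i` add up to `K₀`, and only those with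
`K_i ≤ s H_i` are nonnegative. -/
lemma le_sval_mul_sum (hn : 0 < n) (hK : ∀ i, 0 ≤ K i) (hH : ∀ i, 0 < H i) :
    K0 ≤ sval n K0 K H * ∑ k ∈ univ.filter (fun k => K k ≤ sval n K0 K H * H k), H k := by
  obtain ⟨S, hS, h⟩ := exists_sval_eq hn K0 K H
  set s := sval n K0 K H
  have hSH : 0 < ∑ i ∈ S, H i := sum_pos (fun i _ => hH i) hS
  have hK0 : K0 = ∑ k ∈ S, (s * H k - K k) := by
    rw [sum_sub_distrib, ← mul_sum, h, div_mul_cancel₀ _ hSH.ne']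
    ring
  have hneg : ∑ k ∈ S.filter (fun k => ¬ K k ≤ s * H k), (s * H k - K k) ≤ 0 :=
    sum_nonpos fun k hk => by linarith [not_le.1 (mem_filter.1 hk).2]
  calc K0 = ∑ k ∈ S.filter (fun k => K k ≤ s * H k), (s * H k - K k)
        + ∑ k ∈ S.filter (fun k => ¬ K k ≤ s * H k), (s * H k - K k) := by
          rw [sum_filter_add_sum_filter_not, hK0]
    _ ≤ ∑ k ∈ univ.filter (fun k => K k ≤ s * H k), (s * H k - K k) := by
        have := sum_le_sum_of_subset_of_nonneg (f := fun k => s * H k - K k)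
          (filter_subset_filter _ (subset_univ S))
          fun k hk _ => sub_nonneg.2 (mem_filter.1 hk).2
        linarith
    _ ≤ s * ∑ k ∈ univ.filter (fun k => K k ≤ s * H k), H k := by
        rw [sum_sub_distrib, ← mul_sum]
        linarith [sum_nonneg fun k (_ : k ∈ univ.filter (fun k => K k ≤ s * H k)) => hK k]

noncomputable def startProfile (n : ℕ) (B K0 : ℝ) (K H : Fin n → ℝ) (j : Fin n) : ℝ :=
  min (potCeil B (max √(sval n K0 K H) √(K j / H j))) (potFloor B √(2 * (K0 + K j) / H j))

end Equilibria

section StartProfile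

variable {n : ℕ} {B K0 : ℝ} {K H : Fin n → ℝ}

lemma startProfile_inStrategy (hB : 0 < B) (hK0 : 0 < K0) (hK : ∀ j, 0 ≤ K j)
    (hH : ∀ j, 0 < H j) (hs : 0 < sval n K0 K H) (j : Fin n) :
    InStrategy B K0 (K j) (H j) (startProfile n B K0 K H j) := by
  have hKj := hK j
  have hHj := hH j
  set a := max √(sval n K0 K H) √(K j / H j)
  set hi := √(2 * (K0 + K j) / H j)
  have ha : 0 < a := lt_max_of_lt_left (Real.sqrt_pos.2 hs)
  have hhi : 0 < hi := Real.sqrt_pos.2 (by positivity)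
  have hlow : √(K j / (2 * H j)) ≤ a := le_max_of_le_right
    (Real.sqrt_le_sqrt (div_le_div_of_nonneg_left hKj hHj (by linarith)))
  have hlow' : 2 * √(K j / (2 * H j)) ≤ hi := by
    rw [Real.le_sqrt (by positivity) (by positivity), mul_pow, Real.sq_sqrt (by positivity)]
    rw [show (2 : ℝ) ^ 2 * (K j / (2 * H j)) = 2 * K j / H j by field_simp]
    exact div_le_div_of_nonneg_right (by linarith) hHj.le
  refine ⟨?_, le_min (hlow.trans (le_potCeil hB ha)) (by linarith [lt_two_mul_potFloor hB hhi]),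
    (min_le_right _ _).trans (potFloor_le hB hhi)⟩
  rcases min_choice (potCeil B a) (potFloor B hi) with h | h
  · exact ⟨_, h⟩
  · exact ⟨_, h⟩

lemma startProfile_lt (hB : 0 < B) (hs : 0 < sval n K0 K H) (j : Fin n) :
    startProfile n B K0 K H j < 2 * max √(sval n K0 K H) √(K j / H j) :=
  (min_le_left _ _).trans_lt (potCeil_lt_two_mul hB (lt_max_of_lt_left (Real.sqrt_pos.2 hs)))

lemma sum_le_weightBelow_startProfile (hB : 0 < B) (hH : ∀ j, 0 < H j)
    (hs : 0 < sval n K0 K H) (j : Fin n) :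
    ∑ k ∈ univ.filter (fun k => K k ≤ sval n K0 K H * H k), H k
      ≤ weightBelow H (startProfile n B K0 K H) (potCeil B (max √(sval n K0 K H) √(K j / H j))) := by
  refine sum_le_sum_of_subset_of_nonneg (fun k hk => mem_filter.2 ⟨mem_univ k, ?_⟩)
    fun k _ _ => (hH k).le
  have hsk : √(K k / H k) ≤ √(sval n K0 K H) :=
    Real.sqrt_le_sqrt ((div_le_iff₀ (hH k)).2 (mem_filter.1 hk).2)
  calc startProfile n B K0 K H k ≤ potCeil B (max √(sval n K0 K H) √(K k / H k)) := min_le_left _ _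
    _ = potCeil B √(sval n K0 K H) := by rw [max_eq_left hsk]
    _ ≤ _ := potCeil_mono hB (Real.sqrt_pos.2 hs) (le_max_left _ _)

lemma startProfile_stable (hn : 0 < n) (hB : 0 < B) (hK0 : 0 < K0) (hK : ∀ j, 0 ≤ K j)
    (hH : ∀ j, 0 < H j) (j : Fin n) :
    K j + K0 * H j / weightBelow H (startProfile n B K0 K H) (startProfile n B K0 K H j)
      ≤ 2 * H j * startProfile n B K0 K H j ^ 2 := by
  set s := sval n K0 K H
  set P := startProfile n B K0 K H
  set a := max √s √(K j / H j)
  set hi := √(2 * (K0 + K j) / H j)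
  have hs : 0 < s := sval_pos hn hK0 hK hH
  have hHj := hH j
  have hW : H j ≤ weightBelow H P (P j) := le_weightBelow hH le_rfl
  have hWpos : 0 < weightBelow H P (P j) := hHj.trans_le hW
  rcases le_total (potCeil B a) (potFloor B hi) with hc | hc
  · have hPj : P j = potCeil B a := min_eq_left hc
    have hcover : K0 ≤ s * weightBelow H P (P j) := (le_sval_mul_sum hn hK hH).trans
      (mul_le_mul_of_nonneg_left (hPj ▸ sum_le_weightBelow_startProfile hB hH hs j) hs.le)
    have hshare : K0 * H j / weightBelow H P (P j) ≤ s * H j := by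
      rw [div_le_iff₀ hWpos]
      nlinarith
    have ha : 0 ≤ a := (Real.sqrt_nonneg s).trans (le_max_left _ _)
    have hsa : s ≤ a ^ 2 := by
      simpa [Real.sq_sqrt hs.le] using pow_le_pow_left₀ (Real.sqrt_nonneg s) (le_max_left _ _) 2
    have hKa : K j / H j ≤ a ^ 2 := by
      simpa [Real.sq_sqrt (div_nonneg (hK j) hHj.le)] using
        pow_le_pow_left₀ (Real.sqrt_nonneg _) (le_max_right √s √(K j / H j)) 2
    have haP : a ^ 2 ≤ P j ^ 2 :=
      pow_le_pow_left₀ ha (hPj ▸ le_potCeil hB (lt_max_of_lt_left (Real.sqrt_pos.2 hs))) 2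
    rw [div_le_iff₀ hHj] at hKa
    nlinarith
  · have hPj : P j = potFloor B hi := min_eq_right hc
    have hhi : 0 < hi := Real.sqrt_pos.2 (by have := hK j; positivity)
    have h2P : hi < 2 * P j := hPj ▸ lt_two_mul_potFloor hB hhi
    have hhi2 : H j * hi ^ 2 = 2 * (K0 + K j) := by
      rw [Real.sq_sqrt (by have := hK j; positivity)]
      field_simp
    have hshare : K0 * H j / weightBelow H P (P j) ≤ K0 := by
      rw [div_le_iff₀ hWpos]
      nlinarith
    nlinarith [mul_lt_mul_of_pos_left (pow_lt_pow_left₀ h2P hhi.le two_ne_zero) hHj]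

theorem exists_isNE_lt (hn : 0 < n) (hB : 0 < B) (hK0 : 0 < K0) (hK : ∀ j, 0 ≤ K j)
    (hH : ∀ j, 0 < H j) :
    ∃ T, IsNE B K0 K H H T ∧ ∀ j, T j < 2 * max √(sval n K0 K H) √(K j / H j) := by
  have hs := sval_pos hn hK0 hK hH
  obtain ⟨T, hT, hTP⟩ := exists_isNE_le hB hK0 hK hH hH
    (startProfile_inStrategy hB hK0 hK hH hs) (startProfile_stable hn hB hK0 hK hH)
  exact ⟨T, hT, fun j => (hTP j).trans_lt (startProfile_lt hB hs j)⟩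

lemma potRound_sqrt_sval_le_Tc (hB : 0 < B) (hH : ∀ j, 0 < H j) (hs : 0 < sval n K0 K H)
    (j : Fin n) : potRound B √(sval n K0 K H) ≤ Tc n B K0 K H j := by
  unfold Tc
  split_ifs with hj
  · exact le_rfl
  · exact potRound_mono hB (Real.sqrt_pos.2 hs)
      (Real.sqrt_le_sqrt ((le_div_iff₀ (hH j)).2 (not_le.1 hj).le))

end StartProfile

end JRP

theorem statement11_general {n : ℕ} (B K0 : ℝ) (K H : Fin n → ℝ)
    (hB : 0 < B) (hK0 : 0 < K0) (hK : ∀ i, 0 ≤ K i) (hH : ∀ i, 0 < H i)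
    (Th : Fin n → ℝ)
    (hleast : ∀ T' : Fin n → ℝ, IsNE B K0 K H H T' → ∀ i, Th i ≤ T' i) :
    (∀ i, K i ≤ sval n K0 K H * H i → Th i = 2 * Tc n B K0 K H i →
      Tc n B K0 K H i = (⨅ j, Tc n B K0 K H j) ∧
      Real.sqrt (sval n K0 K H) / Real.sqrt 2 ≤ Tc n B K0 K H i ∧
      Tc n B K0 K H i < Real.sqrt (sval n K0 K H)) ∧
    (∀ i, ¬ K i ≤ sval n K0 K H * H i → Th i = 2 * Tc n B K0 K H i →
      Real.sqrt (K i / H i) / Real.sqrt 2 ≤ Tc n B K0 K H i ∧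
      Tc n B K0 K H i < Real.sqrt (K i / H i)) := by
  have hlt : ∀ i, Th i = 2 * Tc n B K0 K H i →
      Tc n B K0 K H i < max √(sval n K0 K H) √(K i / H i) := fun i hi => by
    obtain ⟨T, hT, hTlt⟩ := JRP.exists_isNE_lt i.pos hB hK0 hK hH
    linarith [hleast T hT i, hTlt i]
  refine ⟨fun i hiU hi => ?_, fun i hiV hi => ?_⟩
  · have hs := JRP.sval_pos i.pos hK0 hK hH
    have hTc : Tc n B K0 K H i = potRound B √(sval n K0 K H) := if_pos hiU
    have hmax := max_eq_left (Real.sqrt_le_sqrt ((div_le_iff₀ (hH i)).2 hiU))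
    have : Nonempty (Fin n) := ⟨i⟩
    refine ⟨le_antisymm (le_ciInf fun j => hTc ▸ JRP.potRound_sqrt_sval_le_Tc hB hH hs j)
      (ciInf_le (Set.finite_range _).bddBelow i), ?_, hmax ▸ hlt i hi⟩
    exact hTc ▸ JRP.div_sqrt_two_le_potRound hB (Real.sqrt_pos.2 hs)
  · have hs := JRP.sval_pos i.pos hK0 hK hH
    have hKH : sval n K0 K H < K i / H i := (lt_div_iff₀ (hH i)).2 (not_le.1 hiV)
    have hTc : Tc n B K0 K H i = potRound B √(K i / H i) := if_neg hiV
    exact ⟨hTc ▸ JRP.div_sqrt_two_le_potRound hB (Real.sqrt_pos.2 (hs.trans hKH)),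
      max_eq_right (Real.sqrt_le_sqrt hKH.le) ▸ hlt i hi⟩

theorem statement11 {n : ℕ} (hn : 0 < n) (B K0 : ℝ) (K H : Fin n → ℝ)
    (hB : 0 < B) (hK0 : 0 < K0) (hK : ∀ i, 0 ≤ K i) (hH : ∀ i, 0 < H i)
    (Th : Fin n → ℝ) (hNE : IsNE B K0 K H H Th)
    (hleast : ∀ T' : Fin n → ℝ, IsNE B K0 K H H T' → ∀ i, Th i ≤ T' i) :
    (∀ i, K i ≤ sval n K0 K H * H i → Th i = 2 * Tc n B K0 K H i →
      Tc n B K0 K H i = (⨅ j, Tc n B K0 K H j) ∧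
      Real.sqrt (sval n K0 K H) / Real.sqrt 2 ≤ Tc n B K0 K H i ∧
      Tc n B K0 K H i < Real.sqrt (sval n K0 K H)) ∧
    (∀ i, ¬ K i ≤ sval n K0 K H * H i → Th i = 2 * Tc n B K0 K H i →
      Real.sqrt (K i / H i) / Real.sqrt 2 ≤ Tc n B K0 K H i ∧
      Tc n B K0 K H i < Real.sqrt (K i / H i)) :=
  statement11_general B K0 K H hB hK0 hK hH Th hleast
end

section
/- (Lower bound 1.05 on price of stability when minor setup costs are private.) Consider the JRP instance with n = 2 retailers, B = 1, K_0 = 5, H_1 = H_2 = 1, K_1 = 1, K_2 = 6. Then the optimal centralized policy is T^c = (2,2) with C(T^c) = 10, and for any weights w_1, w_2 ≥ 0 with w_1 + w_2 > 0 and w_1 ≤ w_2 (using the convention that when an order group has total weight zero, K_0 is split equally among its members), every Nash equilibrium T of the induced WPS game satisfies C(T) ≥ 21/2 = 1.05·C(T^c). -/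
open Finset

/-! Here `s = 6`, so both retailers are rounded to `[√6]_POT = 2` and `C(2, 2) = 10`. The strategy
sets are `{1, 2}` and `{2, 4}`; of the four profiles only `(2, 2)` costs less than
`21/2 = C(2, 4)`, and it is not an equilibrium because the retailer with the larger weight carries
at least half of the major setup cost and gains by halving its ordering frequency. -/

lemma ciInf_fin_two {α : Type*} [ConditionallyCompleteLinearOrder α] (f : Fin 2 → α) :
    ⨅ i, f i = min (f 0) (f 1) :=
  eq_of_forall_le_iff fun c => by
    simp [le_ciInf_iff (Set.finite_range f).bddBelow, Fin.forall_fin_two]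

lemma two_rpow_intCast_sub_half (k : ℤ) : (2 : ℝ) ^ ((k : ℝ) - 1 / 2) = 2 ^ k / √2 := by
  rw [Real.rpow_sub two_pos, Real.rpow_intCast, Real.sqrt_eq_rpow]

lemma two_rpow_intCast_add_half (k : ℤ) : (2 : ℝ) ^ ((k : ℝ) + 1 / 2) = √2 * 2 ^ k := by
  rw [Real.rpow_add two_pos, Real.rpow_intCast, Real.sqrt_eq_rpow, mul_comm]

lemma potRound_eq {B b : ℝ} (k : ℤ) (hB : 0 < B) (hlo : 2 ^ k * B ≤ √2 * b)
    (hhi : b < √2 * (2 ^ k * B)) : potRound B b = 2 ^ k * B := by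
  have hs : 0 < √2 := by positivity
  have hb : 0 < b / B :=
    div_pos (pos_of_mul_pos_right ((by positivity : (0 : ℝ) < 2 ^ k * B).trans_le hlo) hs.le) hB
  rw [potRound, round_eq_iff.2]
  constructor
  · rw [Real.le_logb_iff_rpow_le one_lt_two hb, two_rpow_intCast_sub_half, div_le_div_iff₀ hs hB]
    linarith
  · rw [Real.logb_lt_iff_lt_rpow one_lt_two hb, two_rpow_intCast_add_half, div_lt_iff₀ hB]
    linarith

lemma sval_fin_two (K0 : ℝ) (K H : Fin 2 → ℝ) :
    sval 2 K0 K H = min (min ((K0 + K 0) / H 0) ((K0 + K 1) / H 1))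
      ((K0 + (K 0 + K 1)) / (H 0 + H 1)) := by
  have hne : {S : Finset (Fin 2) | S.Nonempty} = {{0}, {1}, {0, 1}} := by
    ext S
    have hcases : ∀ S : Finset (Fin 2), S.Nonempty ↔ S = {0} ∨ S = {1} ∨ S = {0, 1} := by
      decide
    simpa using hcases S
  rw [sval, hne, Set.image_insert_eq, Set.image_insert_eq, Set.image_singleton,
    csInf_insert (Set.toFinite _).bddBelow (by simp),
    csInf_insert (Set.toFinite _).bddBelow (by simp), csInf_singleton,
    sum_pair zero_ne_one, sum_pair zero_ne_one]
  simp only [sum_singleton, min_assoc]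

lemma IsPOT.eq_or_eq_of_lt_of_lt {t : ℝ} (k : ℤ) (ht : IsPOT 1 t) (hlo : 2 ^ (k - 1) < t)
    (hhi : t < 2 ^ (k + 2)) : t = 2 ^ k ∨ t = 2 ^ (k + 1) := by
  obtain ⟨z, rfl⟩ := ht
  rw [mul_one] at hlo hhi ⊢
  rw [zpow_lt_zpow_iff_right₀ one_lt_two] at hlo hhi
  obtain rfl | rfl : z = k ∨ z = k + 1 := by omega
  exacts [.inl rfl, .inr rfl]

lemma eq_one_or_eq_two_of_inStrategy {t : ℝ} (ht : InStrategy 1 5 1 1 t) : t = 1 ∨ t = 2 := by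
  obtain ⟨hpot, hlo, hhi⟩ := ht
  have h := hpot.eq_or_eq_of_lt_of_lt 0
    (lt_of_lt_of_le (by rw [Real.lt_sqrt (by norm_num)]; norm_num) hlo)
    (lt_of_le_of_lt hhi (by norm_num [Real.sqrt_lt']))
  simpa using h

lemma eq_two_or_eq_four_of_inStrategy {t : ℝ} (ht : InStrategy 1 5 6 1 t) : t = 2 ∨ t = 4 := by
  obtain ⟨hpot, hlo, hhi⟩ := ht
  have h := hpot.eq_or_eq_of_lt_of_lt 1
    (lt_of_lt_of_le (by norm_num [Real.lt_sqrt]) hlo)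
    (lt_of_le_of_lt hhi (by norm_num [Real.sqrt_lt']))
  norm_num at h
  exact h

lemma inStrategy_four : InStrategy 1 5 6 1 4 :=
  ⟨⟨2, by norm_num⟩, by norm_num [Real.sqrt_le_left], by norm_num [Real.le_sqrt]⟩

lemma potRound_sqrt_six : potRound 1 √6 = 2 := by
  have h := potRound_eq (B := 1) (b := √6) 1 one_pos ?_ ?_
  · simpa using h
  · rw [← Real.sqrt_mul zero_le_two]; norm_num [Real.le_sqrt]
  · rw [Real.sqrt_lt' (by positivity), mul_pow]; norm_num

lemma Tc_example (i : Fin 2) : Tc 2 1 5 ![1, 6] ![1, 1] i = 2 := by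
  have hs : sval 2 5 ![1, 6] ![1, 1] = 6 := by norm_num [sval_fin_two]
  rw [Tc, hs, if_pos (by fin_cases i <;> norm_num), potRound_sqrt_six]

lemma sysCost_fin_two (K0 : ℝ) (K H T : Fin 2 → ℝ) :
    sysCost K0 K H T =
      H 0 * T 0 + K 0 / T 0 + (H 1 * T 1 + K 1 / T 1) + K0 / min (T 0) (T 1) := by
  rw [sysCost, Fin.sum_univ_two, ciInf_fin_two]

lemma shareZ_of_forall_le {n : ℕ} (K0 : ℝ) {w T : Fin n → ℝ} {i : Fin n}
    (hmax : ∀ j, T j ≤ T i) (hw : 0 < ∑ j, w j) :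
    shareZ K0 w T i = 1 / T i * (w i / ∑ j, w j) * K0 := by
  have hlevels : (levels T).filter (fun τ => T i ≤ τ) = {T i} := by
    ext τ
    simp only [levels, mem_filter, mem_image, mem_univ, true_and, mem_singleton]
    constructor
    · rintro ⟨⟨j, rfl⟩, hj⟩
      exact le_antisymm (hmax j) hj
    · rintro rfl
      exact ⟨⟨i, rfl⟩, le_rfl⟩
  have hsucc : invSucc (levels T) (T i) = 0 :=
    dif_neg (by simp [levels, hmax])
  have hgroup : univ.filter (fun j => T j ≤ T i) = univ :=
    filter_true_of_mem fun j _ => hmax j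
  rw [shareZ, hlevels, sum_singleton, hsucc, hgroup, if_pos hw, sub_zero]

/- At `(2, 2)` retailer 1 pays `5 + 5r/2` with `r = w 1 / (w 0 + w 1) ≥ 1/2`; moving to `4`
costs `11/2` on its own but only `5r/4` of the major setup, which is strictly better. -/
lemma not_isNEZ_of_eq_two {w T : Fin 2 → ℝ} (hw : 0 < w 0 + w 1) (hw01 : w 0 ≤ w 1)
    (h0 : T 0 = 2) (h1 : T 1 = 2) : ¬ IsNEZ 1 5 ![1, 6] ![1, 1] w T := by
  intro hT
  have hdev := hT.2 1 4 inStrategy_four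
  have hW : 0 < ∑ j, w j := by rwa [Fin.sum_univ_two]
  have hr : 1 / 2 ≤ w 1 / (w 0 + w 1) := by
    rw [le_div_iff₀ hw]
    linarith
  have hmax : ∀ j, T j ≤ T 1 := Fin.forall_fin_two.2 ⟨by rw [h0, h1], le_rfl⟩
  have hmax' : ∀ j, Function.update T 1 4 j ≤ Function.update T 1 4 1 :=
    Fin.forall_fin_two.2 ⟨by norm_num [h0], le_rfl⟩
  rw [indCostZ, indCostZ, shareZ_of_forall_le 5 hmax hW, shareZ_of_forall_le 5 hmax' hW] at hdev
  simp only [Function.update_self, h1] at hdev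
  norm_num at hdev
  linarith

theorem statement13 :
    (∀ i : Fin 2, Tc 2 1 5 ![1, 6] ![1, 1] i = 2) ∧
    sysCost 5 ![1, 6] ![1, 1] (Tc 2 1 5 ![1, 6] ![1, 1]) = 10 ∧
    ∀ w : Fin 2 → ℝ, (∀ i, 0 ≤ w i) → 0 < w 0 + w 1 → w 0 ≤ w 1 →
      ∀ T : Fin 2 → ℝ, IsNEZ 1 5 ![1, 6] ![1, 1] w T →
        21 / 2 ≤ sysCost 5 ![1, 6] ![1, 1] T := by
  refine ⟨Tc_example, ?_, ?_⟩
  · rw [sysCost_fin_two, Tc_example, Tc_example]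
    norm_num
  · intro w _ hw hw01 T hT
    rcases eq_one_or_eq_two_of_inStrategy (hT.1 0) with h0 | h0 <;>
      rcases eq_two_or_eq_four_of_inStrategy (hT.1 1) with h1 | h1
    · rw [sysCost_fin_two, h0, h1]; norm_num
    · rw [sysCost_fin_two, h0, h1]; norm_num
    · exact absurd hT (not_isNEZ_of_eq_two hw hw01 h0 h1)
    · rw [sysCost_fin_two, h0, h1]; norm_num
end

section
/- (Lower bound on price of stability when holding costs are private.) Fix n ≥ 1, B = 1, K_0 = 1, and strictly positive weights w_1 ≤ w_2 ≤ … ≤ w_n. Consider the JRP instance with K_i = 0 for all i and H_i = w_i / (Σ_{1 ≤ j ≤ i} w_j) for each i ∈ N, and let γ = (max_{i∈N} H_i)/(min_{i∈N} H_i). Then: (a) γ ≤ n and Σ_{j∈N} H_j ≥ ln n ≥ ln γ; (b) every Nash equilibrium T under WPS^w satisfies T_i ≥ 1/√2 for all i ∈ N, hence C(T) ≥ (Σ_{j∈N} H_j)/√2; (c) C(T^c) ≤ (3/√2)·√(Σ_{j∈N} H_j); and consequently every Nash equilibrium T satisfies C(T) ≥ (√(ln γ)/3)·C(T^c). -/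
open Finset

-- ===== auxiliary lemmas =====

lemma potRound_pos (b : ℝ) : 0 < potRound 1 b := by
  unfold potRound
  positivity

lemma potRound_bounds {b : ℝ} (hb : 0 < b) :
    b / Real.sqrt 2 ≤ potRound 1 b ∧ potRound 1 b ≤ Real.sqrt 2 * b := by
  unfold potRound
  rw [div_one, mul_one]
  set r := Real.logb 2 b with hr
  set k : ℤ := round r with hk
  have habs := abs_sub_round r
  have h1 : r - 1/2 ≤ (k : ℝ) := by
    have := abs_le.mp habs
    linarith [this.1, this.2]
  have h2 : (k : ℝ) ≤ r + 1/2 := by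
    have := abs_le.mp habs
    linarith [this.1, this.2]
  have hpow : (2:ℝ) ^ k = (2:ℝ) ^ ((k:ℝ)) := by
    rw [Real.rpow_intCast]
  have h2r : (2:ℝ) ^ r = b := Real.rpow_logb (by norm_num) (by norm_num) hb
  have hhalf : (2:ℝ) ^ ((1:ℝ)/2) = Real.sqrt 2 := by
    rw [Real.sqrt_eq_rpow]
  constructor
  · have : (2:ℝ) ^ (r - 1/2) ≤ (2:ℝ) ^ ((k:ℝ)) :=
      Real.rpow_le_rpow_of_exponent_le (by norm_num) h1
    rw [Real.rpow_sub (by norm_num), h2r, hhalf] at this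
    rw [hpow]; exact this
  · have : (2:ℝ) ^ ((k:ℝ)) ≤ (2:ℝ) ^ (r + 1/2) :=
      Real.rpow_le_rpow_of_exponent_le (by norm_num) h2
    rw [Real.rpow_add (by norm_num), h2r, hhalf] at this
    rw [hpow]; linarith [this]

lemma share_step {n : ℕ} (w T : Fin n → ℝ) (hw : ∀ j, 0 < w j)
    (hPOT : ∀ j, ∃ z : ℤ, T j = (2:ℝ) ^ z) (i : Fin n) (m : ℝ)
    (him : T i = m) (hmin : ∀ j, m ≤ T j) :
    share 1 w T i =
      w i / (2 * m * ∑ j ∈ univ.filter (fun j => T j ≤ m), w j)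
        + share 1 w (Function.update T i (2 * m)) i := by
  classical
  obtain ⟨zi, hzi⟩ := hPOT i
  have hm0 : 0 < m := by rw [← him, hzi]; positivity
  have hm2 : m < 2 * m := by linarith
  have gap : ∀ j, T j ≠ m → 2 * m ≤ T j := by
    intro j hj
    obtain ⟨zj, hzj⟩ := hPOT j
    have hlt : m < T j := lt_of_le_of_ne (hmin j) (Ne.symm hj)
    have hzz : zi < zj := by
      rw [← (zpow_lt_zpow_iff_right₀ (by norm_num : (1:ℝ) < 2) (m := zi) (n := zj))]
      rw [← hzj, ← hzi, him]; exact hlt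
    have h1 : (2:ℝ) ^ (zi + 1) ≤ (2:ℝ) ^ zj :=
      zpow_le_zpow_right₀ (by norm_num) (by omega)
    rw [zpow_add_one₀ (by norm_num)] at h1
    rw [hzj]
    calc 2 * m = 2 ^ zi * 2 := by rw [← hzi, him]; ring
    _ ≤ (2:ℝ) ^ zj := h1
  set T' := Function.update T i (2 * m) with hT'
  have hT'i : T' i = 2 * m := Function.update_self i (2*m) T
  have hT'j : ∀ j, j ≠ i → T' j = T j := fun j hj => Function.update_of_ne hj _ _
  have hW : ∀ τ : ℝ, 2 * m ≤ τ →
      (univ.filter (fun j => T' j ≤ τ)) = (univ.filter (fun j => T j ≤ τ)) := by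
    intro τ hτ
    ext j
    simp only [mem_filter, mem_univ, true_and]
    by_cases hj : j = i
    · subst hj
      rw [hT'i, him]
      constructor <;> intro _ <;> linarith
    · rw [hT'j j hj]
  have hLf : ∀ τ : ℝ, 2 * m ≤ τ →
      ((levels T').filter fun u => τ < u) = ((levels T).filter fun u => τ < u) := by
    intro τ hτ
    ext u
    simp only [levels, mem_filter, mem_image, mem_univ, true_and]
    constructor
    · rintro ⟨⟨j, rfl⟩, hu⟩
      by_cases hj : j = i
      · subst hj; rw [hT'i] at hu ⊢; exact absurd hu (by linarith)
      · rw [hT'j j hj] at hu ⊢; exact ⟨⟨j, rfl⟩, hu⟩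
    · rintro ⟨⟨j, rfl⟩, hu⟩
      by_cases hj : j = i
      · subst hj; rw [him] at hu ⊢; exact absurd hu (by linarith)
      · rw [← hT'j j hj] at hu ⊢; exact ⟨⟨j, rfl⟩, hu⟩
  have hIS : ∀ τ : ℝ, 2 * m ≤ τ → invSucc (levels T') τ = invSucc (levels T) τ := by
    intro τ hτ
    unfold invSucc
    rw [hLf τ hτ]
  have hlev : ∀ u ∈ levels T, u = m ∨ 2 * m ≤ u := by
    intro u hu
    simp only [levels, mem_image, mem_univ, true_and] at hu
    obtain ⟨j, rfl⟩ := hu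
    by_cases hj : T j = m
    · exact Or.inl hj
    · exact Or.inr (gap j hj)
  have hminlev : ∀ u ∈ levels T, m ≤ u := by
    intro u hu
    simp only [levels, mem_image, mem_univ, true_and] at hu
    obtain ⟨j, rfl⟩ := hu
    exact hmin j
  have hmlev : m ∈ levels T := by
    simp only [levels, mem_image, mem_univ, true_and]; exact ⟨i, him⟩
  set W : ℝ → ℝ := fun τ => ∑ j ∈ univ.filter (fun j => T j ≤ τ), w j with hWdef
  set e : ℝ → ℝ := fun τ => (1 / τ - invSucc (levels T) τ) * (w i / W τ) * 1 with hedef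
  set e' : ℝ → ℝ := fun τ =>
    (1 / τ - invSucc (levels T') τ) *
      (w i / ∑ j ∈ univ.filter (fun j => T' j ≤ τ), w j) * 1 with he'def
  have hee' : ∀ τ : ℝ, 2 * m ≤ τ → e' τ = e τ := by
    intro τ hτ
    simp only [hedef, he'def]
    rw [hIS τ hτ, hW τ hτ]
  have hWm : 0 < W m := by
    apply Finset.sum_pos (fun j _ => hw j)
    exact ⟨i, mem_filter.mpr ⟨mem_univ i, le_of_eq him⟩⟩
  have hshare : share 1 w T i = ∑ τ ∈ levels T, e τ := by
    unfold share
    rw [Finset.filter_true_of_mem (fun u hu => him ▸ hminlev u hu)]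
  set L2 : Finset ℝ := (levels T).filter (fun u => 2*m ≤ u) with hL2def
  set L2' : Finset ℝ := (levels T).filter (fun u => 2*m < u) with hL2'def
  have hsplit : levels T = insert m L2 := by
    ext u
    simp only [mem_insert, hL2def, mem_filter]
    constructor
    · intro hu
      rcases hlev u hu with h | h
      · exact Or.inl h
      · exact Or.inr ⟨hu, h⟩
    · rintro (rfl | ⟨hu, _⟩)
      · exact hmlev
      · exact hu
  have hmnotin : m ∉ L2 := by
    simp only [hL2def, mem_filter]
    push_neg
    intro _
    linarith
  have h2notin' : (2*m) ∉ L2' := fun h => absurd (mem_filter.mp h).2 (lt_irrefl _)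
  have hshare' : share 1 w T' i = e' (2*m) + ∑ τ ∈ L2', e τ := by
    unfold share
    have hset : (levels T').filter (fun τ => T' i ≤ τ) = insert (2*m) L2' := by
      ext u
      simp only [mem_insert, mem_filter, hL2'def, levels, mem_image, mem_univ, true_and, hT'i]
      constructor
      · rintro ⟨⟨j, rfl⟩, hu⟩
        by_cases hj : j = i
        · subst hj; exact Or.inl hT'i
        · rw [hT'j j hj] at hu ⊢
          rcases eq_or_lt_of_le hu with h | h
          · exact Or.inl h.symm
          · exact Or.inr ⟨⟨j, rfl⟩, h⟩
      · rintro (rfl | ⟨⟨j, rfl⟩, hu⟩)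
        · exact ⟨⟨i, hT'i⟩, le_rfl⟩
        · have hj : j ≠ i := by
            intro h; subst h; rw [him] at hu; linarith
          exact ⟨⟨j, hT'j j hj⟩, by linarith⟩
    rw [hset, Finset.sum_insert h2notin']
    congr 1
    apply Finset.sum_congr rfl
    intro u hu
    have h2u : 2*m ≤ u := le_of_lt (mem_filter.mp hu).2
    exact hee' u h2u
  by_cases hc : (2*m) ∈ levels T
  · have hL2eq : L2 = insert (2*m) L2' := by
      ext u
      simp only [hL2def, hL2'def, mem_insert, mem_filter]
      constructor
      · rintro ⟨hu, h2⟩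
        rcases eq_or_lt_of_le h2 with h | h
        · exact Or.inl h.symm
        · exact Or.inr ⟨hu, h⟩
      · rintro (rfl | ⟨hu, h2⟩)
        · exact ⟨hc, le_rfl⟩
        · exact ⟨hu, le_of_lt h2⟩
    have hne : ((levels T).filter fun u => m < u).Nonempty :=
      ⟨2*m, mem_filter.mpr ⟨hc, hm2⟩⟩
    have hmin'val : ((levels T).filter fun u => m < u).min' hne = 2*m := by
      apply le_antisymm
      · exact min'_le _ _ (mem_filter.mpr ⟨hc, hm2⟩)
      · apply le_min'
        intro u hu
        obtain ⟨hul, hum⟩ := mem_filter.mp hu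
        rcases hlev u hul with h | h
        · exact absurd hum (by rw [h]; exact lt_irrefl m)
        · exact h
    have hISm : invSucc (levels T) m = 1 / (2*m) := by
      unfold invSucc
      rw [dif_pos hne, hmin'val]
    have hem : e m = w i / (2 * m * W m) := by
      simp only [hedef, hISm]
      field_simp
      ring
    rw [hshare, hsplit, Finset.sum_insert hmnotin, hL2eq, Finset.sum_insert h2notin',
      hshare', hem, hee' (2*m) le_rfl]
  · have hL2eq : L2 = L2' := by
      ext u
      simp only [hL2def, hL2'def, mem_filter]
      constructor
      · rintro ⟨hu, h2⟩
        rcases eq_or_lt_of_le h2 with h | h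
        · exact absurd (h ▸ hu) hc
        · exact ⟨hu, h⟩
      · rintro ⟨hu, h2⟩
        exact ⟨hu, le_of_lt h2⟩
    have hW2m : (univ.filter (fun j => T j ≤ 2*m)) = (univ.filter (fun j => T j ≤ m)) := by
      ext j
      simp only [mem_filter, mem_univ, true_and]
      constructor
      · intro hj
        by_cases h : T j = m
        · exact le_of_eq h
        · have hg := gap j h
          have hje : T j = 2*m := le_antisymm hj hg
          exact absurd (by
            simp only [levels, mem_image, mem_univ, true_and]; exact ⟨j, hje⟩) hc
      · intro hj; linarith
    have hfiltereq :
        ((levels T).filter fun u => 2*m < u) = ((levels T).filter fun u => m < u) := by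
      ext u
      simp only [mem_filter]
      constructor
      · rintro ⟨hu, h2⟩
        exact ⟨hu, by linarith⟩
      · rintro ⟨hu, h2⟩
        refine ⟨hu, ?_⟩
        rcases hlev u hu with h | h
        · exact absurd h2 (by rw [h]; exact lt_irrefl m)
        · rcases eq_or_lt_of_le h with h' | h'
          · exact absurd (h' ▸ hu) hc
          · exact h'
    have hq : invSucc (levels T') (2*m) = invSucc (levels T) m := by
      unfold invSucc
      rw [hLf (2*m) le_rfl, hfiltereq]
    have he'2m : e' (2*m) = (1/(2*m) - invSucc (levels T) m) * (w i / W m) * 1 := by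
      simp only [he'def]
      rw [hq, hW (2*m) le_rfl]
      simp only [hWdef]
      rw [hW2m]
    rw [hshare, hsplit, Finset.sum_insert hmnotin, hL2eq, hshare', he'2m]
    have hem : e m = w i / (2 * m * W m)
        + (1/(2*m) - invSucc (levels T) m) * (w i / W m) * 1 := by
      simp only [hedef]
      field_simp
      ring
    rw [hem]
    ring
set_option maxHeartbeats 1600000 in
theorem statement19 {n : ℕ} (hn : 0 < n) (w : Fin n → ℝ)
    (hw : ∀ i, 0 < w i) (hmono : ∀ i j : Fin n, i ≤ j → w i ≤ w j)
    (H : Fin n → ℝ) (hH : ∀ i, H i = w i / ∑ j ∈ Finset.Iic i, w j)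
    (γ : ℝ) (hγ : γ = (⨆ i, H i) / (⨅ i, H i)) :
    (γ ≤ n ∧ Real.log n ≤ ∑ j, H j ∧ Real.log γ ≤ Real.log n) ∧
    (∀ T : Fin n → ℝ, IsNE 1 1 (fun _ => 0) H w T →
      (∀ i, 1 / Real.sqrt 2 ≤ T i) ∧
      (∑ j, H j) / Real.sqrt 2 ≤ sysCost 1 (fun _ => 0) H T) ∧
    sysCost 1 (fun _ => 0) H (Tc n 1 1 (fun _ => 0) H) ≤
      3 / Real.sqrt 2 * Real.sqrt (∑ j, H j) ∧
    (∀ T : Fin n → ℝ, IsNE 1 1 (fun _ => 0) H w T →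
      Real.sqrt (Real.log γ) / 3 * sysCost 1 (fun _ => 0) H (Tc n 1 1 (fun _ => 0) H) ≤
        sysCost 1 (fun _ => 0) H T) := by
  classical
  haveI : Nonempty (Fin n) := Fin.pos_iff_nonempty.mp hn
  have hnpos : (0:ℝ) < n := Nat.cast_pos.mpr hn
  have hSpos : ∀ i : Fin n, 0 < ∑ j ∈ Iic i, w j :=
    fun i => Finset.sum_pos (fun j _ => hw j) ⟨i, mem_Iic.mpr le_rfl⟩
  have hHpos : ∀ i, 0 < H i := fun i => by
    rw [hH i]; exact div_pos (hw i) (hSpos i)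
  have hHle1 : ∀ i, H i ≤ 1 := fun i => by
    rw [hH i, div_le_one (hSpos i)]
    exact Finset.single_le_sum (fun j _ => (hw j).le) (mem_Iic.mpr le_rfl)
  have hsumIic : ∀ i : Fin n, ∑ j ∈ Iic i, w j ≤ ((i:ℕ) + 1 : ℝ) * w i := by
    intro i
    have h1 : ∑ j ∈ Iic i, w j ≤ (Iic i).card • w i :=
      Finset.sum_le_card_nsmul _ _ _ (fun j hj => hmono j i (mem_Iic.mp hj))
    rwa [Fin.card_Iic, nsmul_eq_mul, Nat.cast_add, Nat.cast_one] at h1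
  have hHgei : ∀ i : Fin n, 1/((i:ℕ) + 1 : ℝ) ≤ H i := by
    intro i
    have hipos : (0:ℝ) < (i:ℕ) + 1 := by positivity
    rw [hH i, le_div_iff₀ (hSpos i)]
    calc 1/((i:ℕ) + 1 : ℝ) * ∑ j ∈ Iic i, w j
        ≤ 1/((i:ℕ) + 1 : ℝ) * (((i:ℕ) + 1 : ℝ) * w i) :=
          mul_le_mul_of_nonneg_left (hsumIic i) (by positivity)
      _ = w i := by field_simp
  have hHgen : ∀ i : Fin n, 1/(n:ℝ) ≤ H i := by
    intro i
    refine le_trans ?_ (hHgei i)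
    apply one_div_le_one_div_of_le (by positivity)
    have h1 : (i:ℕ) + 1 ≤ n := i.2
    exact_mod_cast h1
  have hsup_le : (⨆ i, H i) ≤ 1 := ciSup_le hHle1
  have hinf_ge : 1/(n:ℝ) ≤ ⨅ i, H i := le_ciInf hHgen
  have hinf_pos : 0 < ⨅ i, H i := lt_of_lt_of_le (by positivity) hinf_ge
  have hsup_pos : 0 < ⨆ i, H i := by
    obtain ⟨i⟩ := (inferInstance : Nonempty (Fin n))
    exact lt_of_lt_of_le (hHpos i) (le_ciSup (Set.Finite.bddAbove (Set.finite_range H)) i)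
  have hγn : γ ≤ n := by
    rw [hγ]
    calc (⨆ i, H i) / (⨅ i, H i) ≤ 1 / (1/(n:ℝ)) :=
          div_le_div₀ zero_le_one hsup_le (by positivity) hinf_ge
      _ = n := one_div_one_div _
  have hγpos : 0 < γ := by rw [hγ]; exact div_pos hsup_pos hinf_pos
  have hlogn : Real.log n ≤ ∑ j, H j := by
    have h2 : ∑ j : Fin n, (1:ℝ)/((j:ℕ) + 1) ≤ ∑ j, H j :=
      Finset.sum_le_sum (fun j _ => hHgei j)
    have h3 : ∑ j : Fin n, (1:ℝ)/((j:ℕ) + 1) = ∑ i ∈ range n, (1:ℝ)/((i:ℕ) + 1) :=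
      Fin.sum_univ_eq_sum_range (fun i => (1:ℝ)/((i:ℕ) + 1)) n
    have h4 : ((harmonic n : ℚ) : ℝ) = ∑ i ∈ range n, (1:ℝ)/((i:ℕ) + 1) := by
      rw [harmonic]
      push_cast
      simp only [one_div]
    have h5 := log_add_one_le_harmonic n
    push_cast at h5
    have h6 : Real.log n ≤ Real.log ((n:ℝ) + 1) :=
      Real.log_le_log hnpos (by linarith)
    calc Real.log n ≤ Real.log ((n:ℝ) + 1) := h6
      _ ≤ ((harmonic n : ℚ) : ℝ) := h5
      _ = ∑ i ∈ range n, (1:ℝ)/((i:ℕ) + 1) := h4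
      _ = ∑ j : Fin n, (1:ℝ)/((j:ℕ) + 1) := h3.symm
      _ ≤ ∑ j, H j := h2
  have hlogγ : Real.log γ ≤ Real.log n := Real.log_le_log hγpos hγn
  -- ===== part (b) =====
  have hNElow : ∀ T : Fin n → ℝ, IsNE 1 1 (fun _ => 0) H w T →
      ∀ j, 1 / Real.sqrt 2 ≤ T j := by
    intro T hT
    obtain ⟨hstr, hnecond⟩ := hT
    have hPOT : ∀ j, ∃ z : ℤ, T j = (2:ℝ)^z := by
      intro j
      obtain ⟨z, hz⟩ := (hstr j).1
      exact ⟨z, by rw [hz, mul_one]⟩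
    have hTpos : ∀ j, 0 < T j := by
      intro j
      obtain ⟨z, hz⟩ := hPOT j
      rw [hz]; positivity
    by_contra hcon
    push_neg at hcon
    obtain ⟨k, hk⟩ := hcon
    obtain ⟨i0, _, hi0⟩ := Finset.exists_min_image univ T ⟨k, mem_univ k⟩
    set m := T i0 with hmdef
    have hmin : ∀ j, m ≤ T j := fun j => hi0 j (mem_univ j)
    have hm0 : 0 < m := hTpos i0
    have hs2gt1 : (1:ℝ) < Real.sqrt 2 := by
      rw [show (1:ℝ) = Real.sqrt 1 from Real.sqrt_one.symm]
      exact Real.sqrt_lt_sqrt (by norm_num) (by norm_num)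
    have hmlt1 : m < 1 := by
      have h1 : m < 1 / Real.sqrt 2 := lt_of_le_of_lt (hmin k) hk
      have h2 : 1 / Real.sqrt 2 < 1 := by
        rw [div_lt_one (by positivity)]; exact hs2gt1
      linarith
    have hm12 : m ≤ 1/2 := by
      obtain ⟨z0, hz0⟩ := hPOT i0
      have hzlt : z0 < 0 := by
        have hx : (2:ℝ)^z0 < (2:ℝ)^(0:ℤ) := by
          rw [zpow_zero, ← hz0]; exact hmlt1
        exact (zpow_lt_zpow_iff_right₀ (by norm_num : (1:ℝ) < 2)).mp hx
      have hx2 : (2:ℝ)^z0 ≤ (2:ℝ)^(-1 : ℤ) :=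
        zpow_le_zpow_right₀ (by norm_num) (by omega)
      rw [← hz0] at hx2
      simpa using hx2
    set A := univ.filter (fun j => T j = m) with hAdef
    have hAne : A.Nonempty := ⟨i0, mem_filter.mpr ⟨mem_univ _, rfl⟩⟩
    set i := A.max' hAne with hidef
    have hiA : i ∈ A := A.max'_mem hAne
    have him : T i = m := (mem_filter.mp hiA).2
    have hlei : ∀ j ∈ A, j ≤ i := fun j hj => A.le_max' j hj
    have hstr2m : InStrategy 1 1 0 (H i) (2*m) := by
      obtain ⟨z0, hz0⟩ := hPOT i0
      refine ⟨⟨z0 + 1, ?_⟩, ?_, ?_⟩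
      · rw [mul_one, zpow_add_one₀ (by norm_num : (2:ℝ) ≠ 0), ← hz0]; ring
      · rw [zero_div, Real.sqrt_zero]; linarith
      · have h1 : (1:ℝ) ≤ 2*(1+0)/H i := by
          rw [le_div_iff₀ (hHpos i)]
          linarith [hHle1 i]
        calc 2*m ≤ 1 := by linarith
          _ = Real.sqrt 1 := Real.sqrt_one.symm
          _ ≤ Real.sqrt (2*(1+0)/H i) := Real.sqrt_le_sqrt h1
    have hkey := hnecond i (2*m) hstr2m
    simp only [indCost, Function.update_self, zero_div, add_zero] at hkey
    rw [share_step w T hw hPOT i m him hmin, him] at hkey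
    have hWmpos : 0 < ∑ j ∈ univ.filter (fun j => T j ≤ m), w j :=
      Finset.sum_pos (fun j _ => hw j) ⟨i, mem_filter.mpr ⟨mem_univ i, him.le⟩⟩
    have hkey2 : w i / (2 * m * ∑ j ∈ univ.filter (fun j => T j ≤ m), w j) ≤ H i * m := by
      linarith
    rw [hH i] at hkey2
    set Wm : ℝ := ∑ j ∈ univ.filter (fun j => T j ≤ m), w j with hWmdef
    set S : ℝ := ∑ j ∈ Iic i, w j with hSdef
    have hSposi : 0 < S := hSpos i
    have hsub : univ.filter (fun j => T j ≤ m) ⊆ Iic i := by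
      intro j hj
      obtain ⟨_, hjm⟩ := mem_filter.mp hj
      have hjA : j ∈ A := mem_filter.mpr ⟨mem_univ j, le_antisymm hjm (hmin j)⟩
      exact mem_Iic.mpr (hlei j hjA)
    have hWmS : Wm ≤ S :=
      Finset.sum_le_sum_of_subset_of_nonneg hsub (fun j _ _ => (hw j).le)
    rw [div_le_iff₀ (by positivity)] at hkey2
    -- hkey2 : w i ≤ w i / S * m * (2 * m * Wm)
    have hkey3 : w i * S ≤ w i * m * (2 * m * Wm) := by
      have h1 := mul_le_mul_of_nonneg_right hkey2 hSposi.le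
      have e1 : w i / S * m * (2 * m * Wm) * S = w i * m * (2 * m * Wm) := by
        field_simp
      linarith [h1, e1.le, e1.ge]
    have hq1 : 0 ≤ w i * (m*m) * (S - Wm) :=
      mul_nonneg (mul_nonneg (hw i).le (mul_self_nonneg m)) (sub_nonneg.mpr hWmS)
    have hq2 : 0 ≤ (1/4 - m*m) * (w i * S) :=
      mul_nonneg (by nlinarith) (mul_pos (hw i) hSposi).le
    nlinarith [hkey3, hq1, hq2, mul_pos (hw i) hSposi]
  -- ===== part (b), cost bound =====
  have hs2pos : (0:ℝ) < Real.sqrt 2 := Real.sqrt_pos.mpr (by norm_num)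
  have hNEcost : ∀ T : Fin n → ℝ, IsNE 1 1 (fun _ => 0) H w T →
      (∑ j, H j) / Real.sqrt 2 ≤ sysCost 1 (fun _ => 0) H T := by
    intro T hT
    have hlow := hNElow T hT
    have hinfT : 1/Real.sqrt 2 ≤ ⨅ j, T j := le_ciInf hlow
    have hinfTpos : 0 < ⨅ j, T j := lt_of_lt_of_le (by positivity) hinfT
    unfold sysCost
    simp only [zero_div, add_zero]
    calc (∑ j, H j)/Real.sqrt 2 = ∑ j, H j * (1/Real.sqrt 2) := by
          rw [div_eq_mul_one_div, Finset.sum_mul]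
      _ ≤ ∑ j, H j * T j :=
          Finset.sum_le_sum (fun j _ => mul_le_mul_of_nonneg_left (hlow j) (hHpos j).le)
      _ ≤ (∑ j, H j * T j) + 1/(⨅ j, T j) :=
          le_add_of_nonneg_right (one_div_pos.mpr hinfTpos).le
  -- ===== part (c) =====
  have hHspos : 0 < ∑ j, H j := Finset.sum_pos (fun j _ => hHpos j) univ_nonempty
  have hsval : sval n 1 (fun _ => 0) H = 1 / ∑ j, H j := by
    unfold sval
    simp only [Finset.sum_const_zero, add_zero]
    have hmem : (1:ℝ) / ∑ j, H j ∈
        ((fun S : Finset (Fin n) => (1:ℝ) / ∑ i ∈ S, H i) '' {S | S.Nonempty}) :=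
      ⟨univ, univ_nonempty, rfl⟩
    have hbdd : BddBelow ((fun S : Finset (Fin n) => (1:ℝ) / ∑ i ∈ S, H i) '' {S | S.Nonempty}) := by
      refine ⟨0, ?_⟩
      rintro b ⟨S, hS, rfl⟩
      have h0 : (0:ℝ) ≤ ∑ i ∈ S, H i := Finset.sum_nonneg (fun i _ => (hHpos i).le)
      positivity
    apply le_antisymm
    · exact csInf_le hbdd hmem
    · apply le_csInf ⟨_, hmem⟩
      rintro b ⟨S, hS, rfl⟩
      have hSpos' : 0 < ∑ i ∈ S, H i := Finset.sum_pos (fun i _ => hHpos i) hS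
      have hle : ∑ i ∈ S, H i ≤ ∑ j, H j :=
        Finset.sum_le_sum_of_subset_of_nonneg (subset_univ S) (fun j _ _ => (hHpos j).le)
      exact one_div_le_one_div_of_le hSpos' hle
  have hTceq : ∀ i, Tc n 1 1 (fun _ => 0) H i = potRound 1 (Real.sqrt (1/∑ j, H j)) := by
    intro i
    unfold Tc
    rw [hsval, if_pos (show (fun _ : Fin n => (0:ℝ)) i ≤ 1/(∑ j, H j) * H i from
      le_of_lt (mul_pos (one_div_pos.mpr hHspos) (hHpos i)))]
  obtain ⟨a, hadef⟩ : ∃ a : ℝ, a = potRound 1 (Real.sqrt (1/∑ j, H j)) := ⟨_, rfl⟩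
  rw [← hadef] at hTceq
  have hapos : 0 < a := by rw [hadef]; exact potRound_pos _
  have hsqrtpos : 0 < Real.sqrt (1/∑ j, H j) := Real.sqrt_pos.mpr (by positivity)
  obtain ⟨halow, haup⟩ := potRound_bounds hsqrtpos
  rw [← hadef] at halow haup
  have hsqrteq : Real.sqrt (1/∑ j, H j) = 1/Real.sqrt (∑ j, H j) := by
    rw [one_div, Real.sqrt_inv, one_div]
  rw [hsqrteq] at halow haup
  have hhpos : 0 < Real.sqrt (∑ j, H j) := Real.sqrt_pos.mpr hHspos
  have hh2 : Real.sqrt (∑ j, H j) ^ 2 = ∑ j, H j := Real.sq_sqrt hHspos.le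
  have hCval : sysCost 1 (fun _ => 0) H (Tc n 1 1 (fun _ => 0) H) = (∑ j, H j) * a + 1/a := by
    unfold sysCost
    simp only [hTceq, zero_div, add_zero]
    rw [ciInf_const, ← Finset.sum_mul]
  have hs2sq : Real.sqrt 2 * Real.sqrt 2 = 2 := Real.mul_self_sqrt (by norm_num)
  have h1 : 1/Real.sqrt 2 ≤ Real.sqrt (∑ j, H j) * a := by
    have hx := mul_le_mul_of_nonneg_left halow hhpos.le
    have he : Real.sqrt (∑ j, H j) * (1/Real.sqrt (∑ j, H j) / Real.sqrt 2)
        = 1/Real.sqrt 2 := by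
      field_simp
    linarith [hx, he.le, he.ge]
  have h2 : Real.sqrt (∑ j, H j) * a ≤ Real.sqrt 2 := by
    have hx := mul_le_mul_of_nonneg_left haup hhpos.le
    have he : Real.sqrt (∑ j, H j) * (Real.sqrt 2 * (1/Real.sqrt (∑ j, H j)))
        = Real.sqrt 2 := by
      field_simp
    linarith [hx, he.le, he.ge]
  have hs2c : Real.sqrt 2 = 2 * (1/Real.sqrt 2) := by
    rw [mul_one_div, eq_div_iff (ne_of_gt hs2pos)]
    exact hs2sq
  rw [hs2c] at h2
  have key : (Real.sqrt (∑ j, H j) * a - 1/Real.sqrt 2)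
      * (Real.sqrt (∑ j, H j) * a - 2*(1/Real.sqrt 2)) ≤ 0 :=
    mul_nonpos_of_nonneg_of_nonpos (by linarith) (by linarith)
  have hc2 : (1/Real.sqrt 2) * (1/Real.sqrt 2) = 1/2 := by
    rw [div_mul_div_comm, one_mul, hs2sq]
  have hmain : (∑ j, H j) * a^2 + 1 ≤ 3/Real.sqrt 2 * (Real.sqrt (∑ j, H j) * a) := by
    nth_rewrite 1 [← hh2]
    have hexp : 3/Real.sqrt 2 * (Real.sqrt (∑ j, H j) * a)
        = 3*(1/Real.sqrt 2)*(Real.sqrt (∑ j, H j) * a) := by ring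
    rw [hexp]
    linarith [key, hc2]
  have hpartc : sysCost 1 (fun _ => 0) H (Tc n 1 1 (fun _ => 0) H) ≤
      3 / Real.sqrt 2 * Real.sqrt (∑ j, H j) := by
    rw [hCval]
    have hstep : (∑ j, H j) * a + 1/a = ((∑ j, H j) * a^2 + 1)/a := by
      rw [eq_div_iff hapos.ne']
      field_simp
    rw [hstep, div_le_iff₀ hapos]
    linarith [hmain]
  -- ===== assemble =====
  refine ⟨⟨hγn, hlogn, hlogγ⟩, fun T hT => ⟨hNElow T hT, hNEcost T hT⟩, hpartc, ?_⟩
  intro T hT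
  have hCT := hNEcost T hT
  have hCpos : 0 < sysCost 1 (fun _ => 0) H (Tc n 1 1 (fun _ => 0) H) := by
    rw [hCval]
    exact add_pos (mul_pos hHspos hapos) (one_div_pos.mpr hapos)
  have hsl : Real.sqrt (Real.log γ) ≤ Real.sqrt (∑ j, H j) :=
    Real.sqrt_le_sqrt (hlogγ.trans hlogn)
  calc Real.sqrt (Real.log γ)/3 * sysCost 1 (fun _ => 0) H (Tc n 1 1 (fun _ => 0) H)
      ≤ Real.sqrt (∑ j, H j)/3 * sysCost 1 (fun _ => 0) H (Tc n 1 1 (fun _ => 0) H) := by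
        apply mul_le_mul_of_nonneg_right _ hCpos.le
        linarith
    _ ≤ Real.sqrt (∑ j, H j)/3 * (3/Real.sqrt 2 * Real.sqrt (∑ j, H j)) := by
        apply mul_le_mul_of_nonneg_left hpartc (by positivity)
    _ = Real.sqrt (∑ j, H j)^2 / Real.sqrt 2 := by ring
    _ = (∑ j, H j)/Real.sqrt 2 := by rw [hh2]
    _ ≤ sysCost 1 (fun _ => 0) H T := hCT
end
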